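/- arXiv:2301.02497 — 10 statements merged into one kernel-verified Lean document; each statement's English description precedes it below -/
import Mathlib

section
/- Let S be a finite nonempty set of positive integers, let g = gcd(S), and let η be a nonzero complex number. Then η^g is a positive real number if and only if η^i is a positive real number for every i ∈ S. -/
/-- The set of integer exponents `n` such that `η ^ n` is a positive real, as an
additive subgroup of `ℤ`. -/
def posPowSubgroup (η : ℂ) (hη : η ≠ 0) : AddSubgroup ℤ where
  carrier := {n : ℤ | ∃ r : ℝ, 0 < r ∧ η ^ n = (r : ℂ)}
  zero_mem' := ⟨1, one_pos, by simp⟩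
  add_mem' := by
    rintro a b ⟨r, hr, hra⟩ ⟨s, hs, hsb⟩
    exact ⟨r * s, mul_pos hr hs, by rw [zpow_add₀ hη, hra, hsb]; push_cast; ring⟩
  neg_mem' := by
    rintro a ⟨r, hr, hra⟩
    refine ⟨r⁻¹, inv_pos.mpr hr, ?_⟩
    rw [zpow_neg, hra]
    push_cast
    ring

lemma gcd_mem_posPow (η : ℂ) (hη : η ≠ 0) (a b : ℕ)
    (ha : (a : ℤ) ∈ posPowSubgroup η hη) (hb : (b : ℤ) ∈ posPowSubgroup η hη) :
    ((Nat.gcd a b : ℕ) : ℤ) ∈ posPowSubgroup η hη := by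
  rw [Nat.gcd_eq_gcd_ab a b]
  exact AddSubgroup.add_mem _
    (by simpa [mul_comm] using AddSubgroup.zsmul_mem _ ha (Nat.gcdA a b))
    (by simpa [mul_comm] using AddSubgroup.zsmul_mem _ hb (Nat.gcdB a b))

/-- Let `S` be a finite nonempty set of positive integers, let `g = gcd(S)`, and let
`η` be a nonzero complex number. Then `η ^ g` is a positive real if and only if
`η ^ i` is a positive real for every `i ∈ S`. -/
theorem stmt_0 (S : Finset ℕ) (hS : S.Nonempty) (hpos : ∀ i ∈ S, 0 < i)
    (g : ℕ) (hg : g = S.gcd id) (η : ℂ) (hη : η ≠ 0) :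
    (∃ r : ℝ, 0 < r ∧ η ^ g = (r : ℂ)) ↔ ∀ i ∈ S, ∃ r : ℝ, 0 < r ∧ η ^ i = (r : ℂ) := by
  constructor
  · rintro ⟨r, hr, hre⟩ i hi
    have hgd : g ∣ i := hg ▸ Finset.gcd_dvd hi
    obtain ⟨k, hk⟩ := hgd
    refine ⟨r ^ k, pow_pos hr k, ?_⟩
    rw [hk, pow_mul, hre]
    push_cast
    ring
  · intro h
    have key : ∀ s : Finset ℕ, (∀ i ∈ s, (i : ℤ) ∈ posPowSubgroup η hη) →
        ((s.gcd id : ℕ) : ℤ) ∈ posPowSubgroup η hη := by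
      intro s
      induction s using Finset.induction_on with
      | empty => intro _; simpa using AddSubgroup.zero_mem _
      | insert _ _ ha ih =>
        intro hmem
        rw [Finset.gcd_insert]
        exact gcd_mem_posPow η hη _ _ (hmem _ (Finset.mem_insert_self _ _))
          (ih fun i hi => hmem i (Finset.mem_insert_of_mem hi))
    have hmem : ∀ i ∈ S, (i : ℤ) ∈ posPowSubgroup η hη := by
      intro i hi
      obtain ⟨r, hr, hre⟩ := h i hi
      exact ⟨r, hr, by rw [zpow_natCast]; exact hre⟩
    obtain ⟨r, hr, hre⟩ := key S hmem
    rw [← hg, zpow_natCast] at hre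
    exact ⟨r, hr, hre⟩
end

section
/- Let k ≥ 1 and let c_0, …, c_{k−1} be nonnegative integers with c_0 ≥ 1, let φ denote the unique positive real root of P(z) = z^k − Σ_{i=0}^{k−1} c_i z^i, and let g = gcd({i : c_i ≠ 0} ∪ {k}). Then a complex root η of P satisfies |η| = φ if and only if η = φ·ζ for some complex number ζ with ζ^g = 1. -/
open Polynomial

lemma aux_re_eq_one {w : ℂ} (habs : ‖w‖ = 1) (hre : w.re = 1) : w = 1 := by
  have h := Complex.sq_norm w
  rw [habs, Complex.normSq_apply, hre] at h
  have : w.im = 0 := by nlinarith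
  exact Complex.ext hre this

/-- Let `k ≥ 1`, `c₀, …, c_{k-1}` nonnegative integers with `c₀ ≥ 1`, `φ` the unique
positive real root of `P(z) = z^k - ∑_{i=0}^{k-1} c_i z^i`, and
`g = gcd({i : c_i ≠ 0} ∪ {k})`. Then a complex root `η` of `P` satisfies `|η| = φ`
if and only if `η = φ·ζ` for some complex `ζ` with `ζ^g = 1`. -/
theorem stmt_4 (k : ℕ) (hk : 1 ≤ k) (c : ℕ → ℕ) (hc : 1 ≤ c 0)
    (P : Polynomial ℂ)
    (hP : P = X ^ k - ∑ i ∈ Finset.range k, C (c i : ℂ) * X ^ i)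
    (φ : ℝ) (hφpos : 0 < φ) (hφroot : P.eval (φ : ℂ) = 0)
    (hφunique : ∀ x : ℝ, 0 < x → P.eval (x : ℂ) = 0 → x = φ)
    (g : ℕ)
    (hg : g = (((Finset.range k).filter fun i => c i ≠ 0) ∪ {k}).gcd id) :
    ∀ η : ℂ, P.eval η = 0 →
      (‖η‖ = φ ↔ ∃ ζ : ℂ, ζ ^ g = 1 ∧ η = (φ : ℂ) * ζ) := by
  have hkmem : k ∈ ((Finset.range k).filter fun i => c i ≠ 0) ∪ {k} :=
    Finset.mem_union_right _ (Finset.mem_singleton_self k)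
  have hgdvdk : g ∣ k := by
    rw [hg]; exact Finset.gcd_dvd hkmem
  have hg0 : g ≠ 0 := by
    intro h
    rw [h] at hgdvdk
    omega
  have hPeval : ∀ z : ℂ, P.eval z = z ^ k - ∑ i ∈ Finset.range k, (c i : ℂ) * z ^ i := by
    intro z
    simp [hP, eval_finset_sum]
  -- real equation for φ
  have hφC : (φ : ℂ) ^ k = ∑ i ∈ Finset.range k, (c i : ℂ) * (φ : ℂ) ^ i := by
    have := hφroot
    rw [hPeval] at this
    linear_combination this
  have hφR : φ ^ k = ∑ i ∈ Finset.range k, (c i : ℝ) * φ ^ i := by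
    have : ((φ ^ k : ℝ) : ℂ) = ((∑ i ∈ Finset.range k, (c i : ℝ) * φ ^ i : ℝ) : ℂ) := by
      push_cast
      exact hφC
    exact_mod_cast this
  intro η hη
  rw [hPeval] at hη
  have hηeq : η ^ k = ∑ i ∈ Finset.range k, (c i : ℂ) * η ^ i := by linear_combination hη
  have hφne : (φ : ℂ) ≠ 0 := by
    simpa using hφpos.ne'
  constructor
  · intro habs
    refine ⟨η / φ, ?_, by field_simp⟩
    set ζ : ℂ := η / φ with hζ
    have hζabs : ‖ζ‖ = 1 := by
      rw [hζ, norm_div, habs, Complex.norm_of_nonneg hφpos.le, div_self hφpos.ne']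
    have hζne : ζ ≠ 0 := by
      intro h; rw [h] at hζabs; simp at hζabs
    have hηφζ : η = (φ : ℂ) * ζ := by rw [hζ]; field_simp
    -- main complex equation
    have hmain : (φ : ℂ) ^ k = ∑ i ∈ Finset.range k, (c i : ℂ) * (φ : ℂ) ^ i *
        (ζ ^ i * (ζ ^ k)⁻¹) := by
      have hzk : ζ ^ k ≠ 0 := pow_ne_zero _ hζne
      rw [hηφζ, mul_pow] at hηeq
      calc (φ : ℂ) ^ k = ((φ : ℂ) ^ k * ζ ^ k) * (ζ ^ k)⁻¹ := by field_simp
        _ = (∑ i ∈ Finset.range k, (c i : ℂ) * ((φ : ℂ) * ζ) ^ i) * (ζ ^ k)⁻¹ := by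
            rw [hηeq]
        _ = _ := by
            rw [Finset.sum_mul]
            apply Finset.sum_congr rfl
            intro i hi
            rw [mul_pow]
            ring
    -- take real parts
    have hre : ∑ i ∈ Finset.range k, (c i : ℝ) * φ ^ i * (ζ ^ i * (ζ ^ k)⁻¹).re
        = ∑ i ∈ Finset.range k, (c i : ℝ) * φ ^ i := by
      have h1 : ((φ : ℂ) ^ k).re = φ ^ k := by
        rw [← Complex.ofReal_pow, Complex.ofReal_re]
      have h2 := congrArg Complex.re hmain
      rw [h1, Complex.re_sum] at h2
      rw [← hφR, h2]
      apply Finset.sum_congr rfl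
      intro i hi
      have : ((c i : ℂ) * (φ : ℂ) ^ i * (ζ ^ i * (ζ ^ k)⁻¹)) =
          (((c i : ℝ) * φ ^ i : ℝ) : ℂ) * (ζ ^ i * (ζ ^ k)⁻¹) := by push_cast; ring
      rw [this, Complex.re_ofReal_mul]
    have hwabs : ∀ i, ‖ζ ^ i * (ζ ^ k)⁻¹‖ = 1 := by
      intro i
      rw [norm_mul, norm_inv, norm_pow, norm_pow, hζabs]
      simp
    have hle : ∀ i ∈ Finset.range k,
        (c i : ℝ) * φ ^ i * (ζ ^ i * (ζ ^ k)⁻¹).re ≤ (c i : ℝ) * φ ^ i := by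
      intro i hi
      have hnn : (0:ℝ) ≤ (c i : ℝ) * φ ^ i := by positivity
      have hre1 : (ζ ^ i * (ζ ^ k)⁻¹).re ≤ 1 := by
        calc (ζ ^ i * (ζ ^ k)⁻¹).re ≤ ‖ζ ^ i * (ζ ^ k)⁻¹‖ := Complex.re_le_norm _
        _ = 1 := hwabs i
      nlinarith
    have heach := (Finset.sum_eq_sum_iff_of_le hle).mp hre
    -- for each i in support, ζ^i = ζ^k
    have hkey : ∀ i ∈ Finset.range k, c i ≠ 0 → ζ ^ i = ζ ^ k := by
      intro i hi hci
      have hpos : (0:ℝ) < (c i : ℝ) * φ ^ i := by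
        have : (0:ℝ) < (c i : ℝ) := by exact_mod_cast Nat.pos_of_ne_zero hci
        positivity
      have h := heach i hi
      have hre1 : (ζ ^ i * (ζ ^ k)⁻¹).re = 1 := by
        have h' : (c i : ℝ) * φ ^ i * (ζ ^ i * (ζ ^ k)⁻¹).re = (c i : ℝ) * φ ^ i * 1 := by
          rw [mul_one]; exact h
        exact mul_left_cancel₀ hpos.ne' h'
      have hw1 : ζ ^ i * (ζ ^ k)⁻¹ = 1 := aux_re_eq_one (hwabs i) hre1
      have hzk : ζ ^ k ≠ 0 := pow_ne_zero _ hζne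
      field_simp at hw1
      exact hw1
    have hζk : ζ ^ k = 1 := by
      have h0 : ζ ^ 0 = ζ ^ k := hkey 0 (Finset.mem_range.mpr hk) (by omega)
      simpa using h0.symm
    have hord : orderOf ζ ∣ g := by
      rw [hg]
      apply Finset.dvd_gcd
      intro n hn
      rcases Finset.mem_union.mp hn with hn | hn
      · obtain ⟨hn1, hn2⟩ := Finset.mem_filter.mp hn
        have : ζ ^ n = 1 := by rw [hkey n hn1 hn2, hζk]
        exact orderOf_dvd_of_pow_eq_one this
      · rw [Finset.mem_singleton.mp hn]
        exact orderOf_dvd_of_pow_eq_one hζk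
    exact orderOf_dvd_iff_pow_eq_one.mp hord
  · rintro ⟨ζ, hζg, rfl⟩
    have hζabs : ‖ζ‖ = 1 := by
      have h1 : ‖ζ‖ ^ g = 1 := by
        rw [← norm_pow, hζg, norm_one]
      rcases lt_trichotomy ‖ζ‖ 1 with h | h | h
      · exfalso
        have := pow_lt_one₀ (norm_nonneg ζ) h hg0
        rw [h1] at this
        exact lt_irrefl _ this
      · exact h
      · exfalso
        have := one_lt_pow₀ h hg0
        rw [h1] at this
        exact lt_irrefl _ this
    rw [norm_mul, Complex.norm_of_nonneg hφpos.le, hζabs, mul_one]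
end

section
/- Let k ≥ 1 and let c_0, …, c_{k−1} be nonnegative integers with c_0 ≥ 1, and let φ denote the unique positive real root of P(z) = z^k − Σ_{i=0}^{k−1} c_i z^i. Then every complex root η of P with |η| = φ is a simple root (has multiplicity one). -/
open Polynomial

/-- Let `k ≥ 1`, `c₀, …, c_{k-1}` nonnegative integers with `c₀ ≥ 1`, and `φ` the unique
positive real root of `P(z) = z^k - ∑_{i=0}^{k-1} c_i z^i`. Then every complex root `η`
of `P` with `|η| = φ` is a simple root. -/
theorem stmt_5 (k : ℕ) (hk : 1 ≤ k) (c : ℕ → ℕ) (hc : 1 ≤ c 0)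
    (P : Polynomial ℂ)
    (hP : P = X ^ k - ∑ i ∈ Finset.range k, C (c i : ℂ) * X ^ i)
    (φ : ℝ) (hφpos : 0 < φ) (hφroot : P.eval (φ : ℂ) = 0)
    (hφunique : ∀ x : ℝ, 0 < x → P.eval (x : ℂ) = 0 → x = φ) :
    ∀ η : ℂ, P.eval η = 0 → ‖η‖ = φ → P.rootMultiplicity η = 1 := by
  intro η hη habs
  have hPne : P ≠ 0 := by
    intro h0
    have hc1 : P.coeff k = 1 := by
      rw [hP]
      simp [coeff_X_pow, Polynomial.finset_sum_coeff]
    rw [h0] at hc1; simp at hc1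
  -- real root equation: φ^k = ∑ c_i φ^i
  have hreal : φ ^ k = ∑ i ∈ Finset.range k, (c i : ℝ) * φ ^ i := by
    have h := hφroot
    rw [hP] at h
    simp only [eval_sub, eval_pow, eval_X, eval_finset_sum, eval_mul, eval_C,
      sub_eq_zero] at h
    have h2 : ((φ ^ k : ℝ) : ℂ) = ((∑ i ∈ Finset.range k, (c i : ℝ) * φ ^ i : ℝ) : ℂ) := by
      push_cast
      exact h
    exact_mod_cast h2
  have hφk : (0:ℝ) < φ ^ k := pow_pos hφpos k
  -- derivative is not a root
  have hder : ¬ (derivative P).IsRoot η := by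
    intro hd
    rw [hP] at hd
    simp only [IsRoot, derivative_sub, derivative_sum, derivative_C_mul, derivative_X_pow,
      eval_sub, eval_finset_sum, eval_mul, eval_C, eval_pow, eval_X, eval_natCast,
      sub_eq_zero] at hd
    -- multiply by η
    have hmul : (k : ℂ) * η ^ k = ∑ i ∈ Finset.range k, (c i : ℂ) * i * η ^ i := by
      have hk1 : k - 1 + 1 = k := Nat.sub_add_cancel hk
      calc (k : ℂ) * η ^ k = ((k : ℂ) * η ^ (k - 1)) * η := by
            rw [mul_assoc, ← pow_succ, hk1]
        _ = (∑ i ∈ Finset.range k, (c i : ℂ) * (i * η ^ (i - 1))) * η := by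
            rw [hd]
        _ = ∑ i ∈ Finset.range k, (c i : ℂ) * i * η ^ i := by
            rw [Finset.sum_mul]
            refine Finset.sum_congr rfl fun i _ => ?_
            rcases Nat.eq_zero_or_pos i with h0 | hpos
            · subst h0; simp
            · have : i - 1 + 1 = i := Nat.sub_add_cancel hpos
              rw [mul_assoc, mul_assoc, ← pow_succ, this]
              ring
    -- take absolute values
    have hA : ‖(k : ℂ) * η ^ k‖ = (k : ℝ) * φ ^ k := by
      simp [map_mul, map_pow, habs, Complex.norm_natCast]
    have hB : ‖∑ i ∈ Finset.range k, (c i : ℂ) * i * η ^ i‖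
        ≤ ∑ i ∈ Finset.range k, (c i : ℝ) * i * φ ^ i := by
      refine (norm_sum_le _ _).trans_eq ?_
      refine Finset.sum_congr rfl fun i _ => ?_
      simp [map_mul, map_pow, habs, Complex.norm_natCast]
    have hC : ∑ i ∈ Finset.range k, (c i : ℝ) * i * φ ^ i
        ≤ ((k : ℝ) - 1) * φ ^ k := by
      rw [hreal, Finset.mul_sum]
      refine Finset.sum_le_sum fun i hi => ?_
      have hik : (i : ℝ) ≤ (k : ℝ) - 1 := by
        have := Finset.mem_range.mp hi
        have : (i : ℝ) + 1 ≤ (k : ℝ) := by exact_mod_cast this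
        linarith
      have h1 : (0:ℝ) ≤ (c i : ℝ) * φ ^ i := by positivity
      calc (c i : ℝ) * i * φ ^ i = (i : ℝ) * ((c i : ℝ) * φ ^ i) := by ring
        _ ≤ ((k : ℝ) - 1) * ((c i : ℝ) * φ ^ i) := by
            exact mul_le_mul_of_nonneg_right hik h1
    have hkk : (k : ℝ) * φ ^ k ≤ ((k : ℝ) - 1) * φ ^ k := by
      rw [← hA, hmul]; exact hB.trans hC
    nlinarith
  have h1 : 1 ≤ P.rootMultiplicity η := (rootMultiplicity_pos hPne).mpr hη
  have h2 : ¬ 1 < P.rootMultiplicity η := by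
    rw [one_lt_rootMultiplicity_iff_isRoot hPne]
    exact fun h => hder h.2
  omega
end

section
/- Let k ≥ 1 and let c_0, …, c_{k−1} be nonnegative integers with c_0 ≥ 1. Let P(z) = z^k − Σ_{i=0}^{k−1} c_i z^i, let η_1, …, η_k be its complex roots listed with multiplicity, let φ be its unique positive real root, let g = gcd({i : c_i ≠ 0} ∪ {k}), and let ψ ≥ 0 be a real number such that |η| ≤ ψ for every complex root η of P with |η| < φ. Then for every positive integer N not divisible by g, |η_1^N + ⋯ + η_k^N| ≤ (k − g)·ψ^N. -/
open Polynomial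

/-- A complex number whose real part equals its absolute value is a nonnegative real. -/
lemma aux_re_eq_abs {z : ℂ} (h : z.re = ‖z‖) : z = ((‖z‖ : ℝ) : ℂ) := by
  have hsq : ‖z‖ ^ 2 = z.re ^ 2 + z.im ^ 2 := by
    rw [Complex.sq_norm, Complex.normSq_apply]; ring
  have h2 : z.im ^ 2 = 0 := by rw [h] at hsq; linarith
  have him : z.im = 0 := by
    have := sq_eq_zero_iff.mp h2
    exact this
  apply Complex.ext <;> simp [h, him]

/-- Newton power sums of `P(z) = z^k - ∑ c_i z^i` in degrees not divisible by
`g = gcd({i : c_i ≠ 0} ∪ {k})` are bounded by `(k - g)·ψ^N`, where `ψ` bounds the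
absolute values of all roots of modulus `< φ`. -/
theorem stmt_6 (k : ℕ) (hk : 1 ≤ k) (c : ℕ → ℕ) (hc : 1 ≤ c 0)
    (P : Polynomial ℂ)
    (hP : P = X ^ k - ∑ i ∈ Finset.range k, C (c i : ℂ) * X ^ i)
    (φ : ℝ) (hφpos : 0 < φ) (hφroot : P.eval (φ : ℂ) = 0)
    (hφunique : ∀ x : ℝ, 0 < x → P.eval (x : ℂ) = 0 → x = φ)
    (g : ℕ)
    (hg : g = (((Finset.range k).filter fun i => c i ≠ 0) ∪ {k}).gcd id)
    (ψ : ℝ) (hψ0 : 0 ≤ ψ)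
    (hψ : ∀ η ∈ P.roots, ‖η‖ < φ → ‖η‖ ≤ ψ) :
    ∀ N : ℕ, 0 < N → ¬ g ∣ N →
      ‖(P.roots.map fun η => η ^ N).sum‖ ≤ ((k : ℝ) - g) * ψ ^ N := by
  classical
  intro N hN hgN
  set S : Finset ℕ := ((Finset.range k).filter fun i => c i ≠ 0) ∪ {k} with hS
  have hφC : (φ : ℂ) ≠ 0 := by
    simpa using (Complex.ofReal_ne_zero.mpr hφpos.ne')
  -- membership facts about S and g
  have hgdvd : ∀ i ∈ S, g ∣ i := fun i hi => by
    simpa using hg ▸ Finset.gcd_dvd hi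
  have hgk : g ∣ k := hgdvd k (by simp [hS])
  have hg0 : g ≠ 0 := by
    rintro rfl
    rw [zero_dvd_iff] at hgk; omega
  have hgle : g ≤ k := Nat.le_of_dvd hk hgk
  have hmemS : ∀ i ∈ Finset.range k, c i ≠ 0 → i ∈ S := fun i hi hci => by
    simp [hS, Finset.mem_filter, Finset.mem_range] at hi ⊢
    exact Or.inr ⟨hi, hci⟩
  -- the real root identity
  have hreal : φ ^ k = ∑ i ∈ Finset.range k, (c i : ℝ) * φ ^ i := by
    have h1 := hφroot
    rw [hP] at h1
    simp only [eval_sub, eval_pow, eval_X, eval_finset_sum, eval_mul, eval_C,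
      sub_eq_zero] at h1
    exact_mod_cast h1
  -- roots are given by the polynomial equation
  have hQdeg : (∑ i ∈ Finset.range k, C ((c i : ℂ)) * X ^ i).natDegree < k := by
    apply Nat.lt_of_le_of_lt
      (Polynomial.natDegree_sum_le_of_forall_le _ _ (n := k - 1) ?_)
    · omega
    · intro i hi
      refine le_trans (Polynomial.natDegree_C_mul_le _ _) ?_
      rw [Polynomial.natDegree_X_pow]
      have := Finset.mem_range.mp hi
      omega
  have hdeg : P.natDegree = k := by
    rw [hP, Polynomial.natDegree_sub_eq_left_of_natDegree_lt, Polynomial.natDegree_X_pow]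
    rwa [Polynomial.natDegree_X_pow]
  have hPne : P ≠ 0 := fun h => by
    rw [h, Polynomial.natDegree_zero] at hdeg; omega
  have hcard : Multiset.card P.roots = k := by
    rw [Polynomial.splits_iff_card_roots.mp (IsAlgClosed.splits P), hdeg]
  have hrooteq : ∀ x : ℂ, P.eval x = 0 ↔
      x ^ k = ∑ i ∈ Finset.range k, (c i : ℂ) * x ^ i := by
    intro x
    rw [hP]
    simp [sub_eq_zero, eval_finset_sum]
  -- all roots have modulus at most φ
  have habs_le : ∀ x : ℂ, P.eval x = 0 → ‖x‖ ≤ φ := by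
    intro x hx
    by_contra hgt
    push_neg at hgt
    set r := ‖x‖ with hr
    have hr0 : 0 < r := lt_trans hφpos hgt
    have hxk : x ^ k = ∑ i ∈ Finset.range k, (c i : ℂ) * x ^ i := (hrooteq x).mp hx
    have htri : r ^ k ≤ ∑ i ∈ Finset.range k, (c i : ℝ) * r ^ i := by
      calc r ^ k = ‖x ^ k‖ := by rw [norm_pow]
        _ = ‖∑ i ∈ Finset.range k, (c i : ℂ) * x ^ i‖ := by rw [hxk]
        _ ≤ ∑ i ∈ Finset.range k, ‖(c i : ℂ) * x ^ i‖ :=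
            norm_sum_le _ _
        _ = ∑ i ∈ Finset.range k, (c i : ℝ) * r ^ i := by
            apply Finset.sum_congr rfl
            intro i _
            rw [norm_mul, norm_pow, Complex.norm_natCast]
    have hterm : ∀ i ∈ Finset.range k,
        (c i : ℝ) * r ^ i * φ ^ (k - 1) ≤ (c i : ℝ) * φ ^ i * r ^ (k - 1) := by
      intro i hi
      have hik : i ≤ k - 1 := by have := Finset.mem_range.mp hi; omega
      have h1 : r ^ i * φ ^ (k - 1) ≤ φ ^ i * r ^ (k - 1) := by
        have e1 : φ ^ (k - 1) = φ ^ i * φ ^ (k - 1 - i) := by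
          rw [← pow_add]; congr 1; omega
        have e2 : r ^ (k - 1) = r ^ i * r ^ (k - 1 - i) := by
          rw [← pow_add]; congr 1; omega
        rw [e1, e2]
        calc r ^ i * (φ ^ i * φ ^ (k - 1 - i)) = r ^ i * φ ^ i * φ ^ (k - 1 - i) := by ring
          _ ≤ r ^ i * φ ^ i * r ^ (k - 1 - i) := by
              apply mul_le_mul_of_nonneg_left (pow_le_pow_left₀ hφpos.le hgt.le _)
              positivity
          _ = φ ^ i * (r ^ i * r ^ (k - 1 - i)) := by ring
      calc (c i : ℝ) * r ^ i * φ ^ (k - 1) = (c i : ℝ) * (r ^ i * φ ^ (k - 1)) := by ring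
        _ ≤ (c i : ℝ) * (φ ^ i * r ^ (k - 1)) :=
            mul_le_mul_of_nonneg_left h1 (Nat.cast_nonneg _)
        _ = (c i : ℝ) * φ ^ i * r ^ (k - 1) := by ring
    have hkey : r ^ k * φ ^ (k - 1) ≤ φ ^ k * r ^ (k - 1) := by
      calc r ^ k * φ ^ (k - 1)
          ≤ (∑ i ∈ Finset.range k, (c i : ℝ) * r ^ i) * φ ^ (k - 1) :=
            mul_le_mul_of_nonneg_right htri (by positivity)
        _ = ∑ i ∈ Finset.range k, (c i : ℝ) * r ^ i * φ ^ (k - 1) := by rw [Finset.sum_mul]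
        _ ≤ ∑ i ∈ Finset.range k, (c i : ℝ) * φ ^ i * r ^ (k - 1) := Finset.sum_le_sum hterm
        _ = (∑ i ∈ Finset.range k, (c i : ℝ) * φ ^ i) * r ^ (k - 1) := by rw [Finset.sum_mul]
        _ = φ ^ k * r ^ (k - 1) := by rw [← hreal]
    have hrk : r ^ k = r * r ^ (k - 1) := by
      rw [← pow_succ']; congr 1; omega
    have hφk : φ ^ k = φ * φ ^ (k - 1) := by
      rw [← pow_succ']; congr 1; omega
    rw [hrk, hφk] at hkey
    have hprod : 0 < r ^ (k - 1) * φ ^ (k - 1) := by positivity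
    have : r ≤ φ := by
      have h2 : r * (r ^ (k - 1) * φ ^ (k - 1)) ≤ φ * (r ^ (k - 1) * φ ^ (k - 1)) := by
        nlinarith [hkey]
      exact le_of_mul_le_mul_right (by linarith [h2]; ) hprod
    linarith
  -- roots of modulus φ satisfy x^g = φ^g
  have hcircle : ∀ x : ℂ, P.eval x = 0 → ‖x‖ = φ → x ^ g = (φ : ℂ) ^ g := by
    intro x hx habs
    have hxk : x ^ k = ∑ i ∈ Finset.range k, (c i : ℂ) * x ^ i := (hrooteq x).mp hx
    set w : ℕ → ℂ := fun i => x ^ i * (starRingEnd ℂ) (x ^ k) with hw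
    have habsw : ∀ i, ‖w i‖ = φ ^ i * φ ^ k := by
      intro i
      rw [hw]
      simp only [norm_mul, Complex.norm_conj, norm_pow, habs]
    have hre : ∀ i, (w i).re ≤ φ ^ i * φ ^ k := fun i =>
      (Complex.re_le_norm _).trans (habsw i).le
    have hsumeq : ∑ i ∈ Finset.range k, (c i : ℝ) * (w i).re
        = ∑ i ∈ Finset.range k, (c i : ℝ) * (φ ^ i * φ ^ k) := by
      have h1 : ((φ ^ k * φ ^ k : ℝ) : ℂ) = ∑ i ∈ Finset.range k, (c i : ℂ) * w i := by
        calc ((φ ^ k * φ ^ k : ℝ) : ℂ) = x ^ k * (starRingEnd ℂ) (x ^ k) := by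
              rw [Complex.mul_conj]
              have : Complex.normSq (x ^ k) = φ ^ k * φ ^ k := by
                rw [Complex.normSq_eq_norm_sq, norm_pow, habs]; ring
              rw [this]
          _ = (∑ i ∈ Finset.range k, (c i : ℂ) * x ^ i) * (starRingEnd ℂ) (x ^ k) := by
              rw [← hxk]
          _ = ∑ i ∈ Finset.range k, (c i : ℂ) * w i := by
              rw [Finset.sum_mul]
              exact Finset.sum_congr rfl fun i _ => by rw [hw]; ring
      have h2 := congrArg Complex.re h1
      rw [Complex.re_sum, Complex.ofReal_re] at h2
      have h3 : ∑ i ∈ Finset.range k, ((c i : ℂ) * w i).re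
          = ∑ i ∈ Finset.range k, (c i : ℝ) * (w i).re := by
        apply Finset.sum_congr rfl
        intro i _
        rw [Complex.mul_re]
        simp
      rw [h3] at h2
      rw [← h2]
      have h4 : ∑ i ∈ Finset.range k, (c i : ℝ) * (φ ^ i * φ ^ k)
          = (∑ i ∈ Finset.range k, (c i : ℝ) * φ ^ i) * φ ^ k := by
        rw [Finset.sum_mul]
        exact Finset.sum_congr rfl fun i _ => by ring
      rw [h4, ← hreal]
    have heach := (Finset.sum_eq_sum_iff_of_le (fun i _ =>
      mul_le_mul_of_nonneg_left (hre i) (Nat.cast_nonneg (c i)))).mp hsumeq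
    have heq : ∀ i ∈ Finset.range k, c i ≠ 0 → w i = ((φ : ℂ) ^ i * (φ : ℂ) ^ k) := by
      intro i hi hci
      have hc' : (0 : ℝ) < (c i : ℝ) := by exact_mod_cast Nat.pos_of_ne_zero hci
      have h4 : (w i).re = φ ^ i * φ ^ k :=
        mul_left_cancel₀ (ne_of_gt hc') (heach i hi)
      have h5 : (w i).re = ‖w i‖ := by rw [habsw i, h4]
      have h6 := aux_re_eq_abs h5
      rw [habsw i] at h6
      rw [h6]
      push_cast
      ring
    have hxk1 : x ^ k = (φ : ℂ) ^ k := by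
      have h0 := heq 0 (Finset.mem_range.mpr hk) (by omega)
      rw [hw] at h0
      simp only [pow_zero, one_mul] at h0
      have h1 := congrArg (starRingEnd ℂ) h0
      rw [Complex.conj_conj] at h1
      rw [h1, map_pow, Complex.conj_ofReal]
    have hconjφ : (starRingEnd ℂ) ((φ : ℂ) ^ k) = (φ : ℂ) ^ k := by
      rw [map_pow, Complex.conj_ofReal]
    have hxi : ∀ i ∈ S, x ^ i = (φ : ℂ) ^ i := by
      intro i hi
      rw [hS, Finset.mem_union] at hi
      rcases hi with hi | hi
      · rw [Finset.mem_filter] at hi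
        have h6 := heq i hi.1 hi.2
        rw [hw, hxk1, hconjφ] at h6
        exact mul_right_cancel₀ (pow_ne_zero _ hφC) h6
      · rw [Finset.mem_singleton] at hi
        subst hi
        exact hxk1
    set u : ℂ := x / (φ : ℂ) with hu
    have hune : ∀ i ∈ S, u ^ i = 1 := by
      intro i hi
      rw [hu, div_pow, hxi i hi, div_self (pow_ne_zero _ hφC)]
    have hdvd : orderOf u ∣ g := by
      rw [hg]
      exact Finset.dvd_gcd fun i hi => orderOf_dvd_iff_pow_eq_one.mpr (hune i hi)
    have hug : u ^ g = 1 := orderOf_dvd_iff_pow_eq_one.mp hdvd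
    have hxu : x = (φ : ℂ) * u := by rw [hu]; field_simp
    rw [hxu, mul_pow, hug, mul_one]
  -- powers of such points agree with powers of φ in degrees divisible by g
  have hxpow : ∀ x : ℂ, x ^ g = (φ : ℂ) ^ g → ∀ i : ℕ, g ∣ i → x ^ i = (φ : ℂ) ^ i := by
    intro x hx i hi
    obtain ⟨m, rfl⟩ := hi
    rw [pow_mul, pow_mul, hx]
  -- conversely, every x with x^g = φ^g is a root of P
  have hrootA : ∀ x : ℂ, x ^ g = (φ : ℂ) ^ g → P.eval x = 0 := by
    intro x hx
    rw [hrooteq, hxpow x hx k hgk]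
    have h1 : ∑ i ∈ Finset.range k, (c i : ℂ) * x ^ i
        = ∑ i ∈ Finset.range k, (c i : ℂ) * (φ : ℂ) ^ i := by
      apply Finset.sum_congr rfl
      intro i hi
      by_cases hci : c i = 0
      · simp [hci]
      · rw [hxpow x hx i (hgdvd i (hmemS i hi hci))]
    rw [h1]
    have h2 := congrArg (fun t : ℝ => (t : ℂ)) hreal
    push_cast at h2
    exact h2
  -- and it is a simple root
  have hsimple : ∀ x : ℂ, x ^ g = (φ : ℂ) ^ g → P.roots.count x = 1 := by
    intro x hx
    have hxroot : P.eval x = 0 := hrootA x hx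
    have hderiv : Polynomial.derivative P =
        C (k : ℂ) * X ^ (k - 1) - ∑ i ∈ Finset.range k, C ((c i : ℂ) * i) * X ^ (i - 1) := by
      rw [hP, derivative_sub, derivative_X_pow, derivative_sum]
      congr 1
      exact Finset.sum_congr rfl fun i _ => derivative_C_mul_X_pow _ _
    have hvalue : x * (Polynomial.derivative P).eval x =
        ((k * φ ^ k - ∑ i ∈ Finset.range k, (i : ℝ) * (c i : ℝ) * φ ^ i : ℝ) : ℂ) := by
      rw [hderiv]
      simp only [eval_sub, eval_mul, eval_C, eval_pow, eval_X, eval_finset_sum]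
      rw [mul_sub, Finset.mul_sum]
      have h1 : x * ((k : ℂ) * x ^ (k - 1)) = (k : ℂ) * (φ : ℂ) ^ k := by
        rw [show x * ((k : ℂ) * x ^ (k - 1)) = (k : ℂ) * (x * x ^ (k - 1)) by ring,
          ← pow_succ', (by omega : k - 1 + 1 = k), hxpow x hx k hgk]
      have h2 : ∀ i ∈ Finset.range k,
          x * ((c i : ℂ) * (i : ℂ) * x ^ (i - 1)) = (i : ℂ) * (c i : ℂ) * (φ : ℂ) ^ i := by
        intro i hi
        by_cases hci : c i = 0
        · simp [hci]
        by_cases hi0 : i = 0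
        · simp [hi0]
        have h3 : x * x ^ (i - 1) = x ^ i := by
          rw [← pow_succ']; congr 1; omega
        calc x * ((c i : ℂ) * (i : ℂ) * x ^ (i - 1))
            = (i : ℂ) * (c i : ℂ) * (x * x ^ (i - 1)) := by ring
          _ = (i : ℂ) * (c i : ℂ) * x ^ i := by rw [h3]
          _ = (i : ℂ) * (c i : ℂ) * (φ : ℂ) ^ i := by
              rw [hxpow x hx i (hgdvd i (hmemS i hi hci))]
      rw [h1, Finset.sum_congr rfl h2]
      push_cast
      ring
    have hpos : (0 : ℝ) < k * φ ^ k - ∑ i ∈ Finset.range k, (i : ℝ) * (c i : ℝ) * φ ^ i := by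
      have h1 : ∑ i ∈ Finset.range k, (i : ℝ) * (c i : ℝ) * φ ^ i
          < ∑ i ∈ Finset.range k, (k : ℝ) * ((c i : ℝ) * φ ^ i) := by
        apply Finset.sum_lt_sum
        · intro i hi
          have hik : (i : ℝ) ≤ (k : ℝ) := by
            exact_mod_cast (Finset.mem_range.mp hi).le
          calc (i : ℝ) * (c i : ℝ) * φ ^ i = (i : ℝ) * ((c i : ℝ) * φ ^ i) := by ring
            _ ≤ (k : ℝ) * ((c i : ℝ) * φ ^ i) :=
                mul_le_mul_of_nonneg_right hik (by positivity)
        · refine ⟨0, Finset.mem_range.mpr hk, ?_⟩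
          simp only [Nat.cast_zero, zero_mul, pow_zero, mul_one]
          have hc0 : (1 : ℝ) ≤ (c 0 : ℝ) := by exact_mod_cast hc
          have hk1 : (1 : ℝ) ≤ (k : ℝ) := by exact_mod_cast hk
          nlinarith
      have h2 : ∑ i ∈ Finset.range k, (k : ℝ) * ((c i : ℝ) * φ ^ i) = (k : ℝ) * φ ^ k := by
        rw [← Finset.mul_sum, ← hreal]
      linarith
    have hx0 : x ≠ 0 := by
      intro h
      rw [h, zero_pow hg0] at hx
      exact (pow_ne_zero g hφC) hx.symm
    have hdne : (Polynomial.derivative P).eval x ≠ 0 := by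
      intro h
      rw [h, mul_zero] at hvalue
      have : (k * φ ^ k - ∑ i ∈ Finset.range k, (i : ℝ) * (c i : ℝ) * φ ^ i : ℝ) = 0 := by
        exact_mod_cast hvalue.symm
      linarith
    rw [Polynomial.count_roots]
    have hge : 1 ≤ P.rootMultiplicity x := (Polynomial.rootMultiplicity_pos hPne).mpr hxroot
    by_contra hne
    have h2 : 2 ≤ P.rootMultiplicity x := by omega
    have h3 := Polynomial.derivative_rootMultiplicity_of_root hxroot
    have h4 : 0 < (Polynomial.derivative P).rootMultiplicity x := by omega
    have h5 : Polynomial.derivative P ≠ 0 := by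
      intro h
      rw [h] at hdne
      exact hdne (Polynomial.eval_zero)
    exact hdne ((Polynomial.rootMultiplicity_pos h5).mp h4)
  -- the multiset of circle roots
  set ζ : ℂ := Complex.exp (2 * Real.pi * Complex.I / g) with hζdef
  have hζ : IsPrimitiveRoot ζ g := Complex.isPrimitiveRoot_exp g hg0
  set A : Multiset ℂ := Polynomial.nthRoots g ((φ : ℂ) ^ g) with hA
  have hAmem : ∀ x : ℂ, x ∈ A ↔ x ^ g = (φ : ℂ) ^ g := fun x =>
    Polynomial.mem_nthRoots (Nat.pos_of_ne_zero hg0)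
  have hAnodup : A.Nodup := hζ.nthRoots_nodup (pow_ne_zero _ hφC)
  have hAeq : A = (Multiset.range g).map (fun j => ζ ^ j * (φ : ℂ)) :=
    hζ.nthRoots_eq rfl
  have hAcard : Multiset.card A = g := by rw [hAeq]; simp
  have hAle : A ≤ P.roots := by
    rw [Multiset.le_iff_count]
    intro a
    by_cases ha : a ∈ A
    · rw [Multiset.count_eq_one_of_mem hAnodup ha, hsimple a ((hAmem a).mp ha)]
    · simp [Multiset.count_eq_zero_of_notMem ha]
  set B : Multiset ℂ := P.roots - A with hB
  have hsplit : P.roots = A + B := by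
    rw [hB, add_comm]
    exact (tsub_add_cancel_of_le hAle).symm
  have hBcard : Multiset.card B = k - g := by
    have := congrArg Multiset.card hsplit
    rw [Multiset.card_add, hcard, hAcard] at this
    omega
  have hBlt : ∀ η ∈ B, ‖η‖ ≤ ψ := by
    intro η hη
    have hηroots : η ∈ P.roots := Multiset.mem_of_le tsub_le_self hη
    have hηeval : P.eval η = 0 := (Polynomial.mem_roots hPne).mp hηroots
    rcases lt_or_eq_of_le (habs_le η hηeval) with h | h
    · exact hψ η hηroots h
    · exfalso
      have hg' := hcircle η hηeval h
      have h1 : P.roots.count η = 1 := hsimple η hg'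
      have h2 : A.count η = 1 :=
        Multiset.count_eq_one_of_mem hAnodup ((hAmem η).mpr hg')
      have h3 : B.count η = 0 := by
        rw [hB, Multiset.count_sub, h1, h2]
      exact absurd (Multiset.count_pos.mpr hη) (by omega)
  -- the sum over A is zero
  have hAsum : (A.map fun η => η ^ N).sum = 0 := by
    rw [hAeq, Multiset.map_map]
    have h1 : (Multiset.range g).map ((fun η => η ^ N) ∘ fun j => ζ ^ j * (φ : ℂ))
        = (Multiset.range g).map (fun j => (φ : ℂ) ^ N * (ζ ^ N) ^ j) := by
      apply Multiset.map_congr rfl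
      intro j _
      simp only [Function.comp_apply]
      rw [mul_pow, ← pow_mul, ← pow_mul, mul_comm j N, pow_mul]
      ring
    rw [h1]
    have h2 : ((Multiset.range g).map fun j => (φ : ℂ) ^ N * (ζ ^ N) ^ j).sum
        = ∑ j ∈ Finset.range g, (φ : ℂ) ^ N * (ζ ^ N) ^ j := rfl
    rw [h2, ← Finset.mul_sum]
    have hζN : ζ ^ N ≠ 1 := fun h => hgN ((hζ.pow_eq_one_iff_dvd N).mp h)
    rw [geom_sum_eq hζN]
    have h3 : (ζ ^ N) ^ g = 1 := by
      rw [← pow_mul, mul_comm, pow_mul, hζ.pow_eq_one, one_pow]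
    rw [h3]
    simp
  -- final bound
  rw [hsplit, Multiset.map_add, Multiset.sum_add, hAsum, zero_add]
  calc ‖(B.map fun η => η ^ N).sum‖
      ≤ ((B.map fun η => η ^ N).map (fun z : ℂ => ‖z‖)).sum := by
        simpa using norm_multiset_sum_le (B.map fun η => η ^ N)
    _ ≤ (Multiset.card ((B.map fun η => η ^ N).map (fun z : ℂ => ‖z‖))) • (ψ ^ N) := by
        apply Multiset.sum_le_card_nsmul
        intro x hx
        simp only [Multiset.mem_map] at hx
        obtain ⟨y, ⟨η, hη, rfl⟩, rfl⟩ := hx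
        rw [norm_pow]
        exact pow_le_pow_left₀ (norm_nonneg η) (hBlt η hη) N
    _ = ((k : ℝ) - g) * ψ ^ N := by
        rw [Multiset.card_map, Multiset.card_map, hBcard, nsmul_eq_mul,
          Nat.cast_sub hgle]
end

section
/- Let k ≥ 1 and let c_0, …, c_{k−1} be nonnegative integers with c_0 ≥ 1. Let P(z) = z^k − Σ_{i=0}^{k−1} c_i z^i, let η_1, …, η_k be its complex roots listed with multiplicity, let φ be its unique positive real root, let g = gcd({i : c_i ≠ 0} ∪ {k}), and let ψ ≥ 0 be a real number such that |η| ≤ ψ for every complex root η of P with |η| < φ. Then for every positive integer n, |g·φ^{gn} − (η_1^{gn} + ⋯ + η_k^{gn})| ≤ (k − g)·ψ^{gn}. -/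
open Polynomial

private lemma aux_gt (k : ℕ) (hk : 1 ≤ k) (c : ℕ → ℕ) (hc : 1 ≤ c 0) (φ : ℝ) (hφ : 0 < φ)
    (hroot : φ ^ k = ∑ i ∈ Finset.range k, (c i : ℝ) * φ ^ i) :
    ∀ x : ℝ, φ < x → (∑ i ∈ Finset.range k, (c i : ℝ) * x ^ i) < x ^ k := by
  intro x hx
  have hx0 : 0 < x := hφ.trans hx
  have key : ∑ i ∈ Finset.range k, ((c i : ℝ) * x ^ i) * φ ^ k <
      ∑ i ∈ Finset.range k, ((c i : ℝ) * φ ^ i) * x ^ k := by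
    apply Finset.sum_lt_sum
    · intro i hi
      have hik : i ≤ k := (Finset.mem_range.mp hi).le
      have h1 : φ ^ k = φ ^ i * φ ^ (k - i) := by
        rw [← pow_add, Nat.add_sub_cancel' hik]
      have h2 : x ^ k = x ^ i * x ^ (k - i) := by
        rw [← pow_add, Nat.add_sub_cancel' hik]
      have h3 : φ ^ (k - i) ≤ x ^ (k - i) := pow_le_pow_left₀ hφ.le hx.le _
      calc (c i : ℝ) * x ^ i * φ ^ k = (c i : ℝ) * (x ^ i * φ ^ i) * φ ^ (k - i) := by
            rw [h1]; ring
        _ ≤ (c i : ℝ) * (x ^ i * φ ^ i) * x ^ (k - i) := by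
            apply mul_le_mul_of_nonneg_left h3
            positivity
        _ = (c i : ℝ) * φ ^ i * x ^ k := by rw [h2]; ring
    · refine ⟨0, Finset.mem_range.mpr hk, ?_⟩
      have h4 : φ ^ k < x ^ k := pow_lt_pow_left₀ hx hφ.le (by omega)
      have hc0 : (1 : ℝ) ≤ (c 0 : ℝ) := by exact_mod_cast hc
      simp only [pow_zero, mul_one]
      nlinarith
  rw [← Finset.sum_mul, ← Finset.sum_mul, ← hroot] at key
  have hφk : 0 < φ ^ k := pow_pos hφ k
  nlinarith

private lemma aux_re_one {z : ℂ} (h1 : ‖z‖ = 1) (h2 : z.re = 1) : z = 1 := by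
  have hsq := Complex.sq_norm z
  rw [h1] at hsq
  have him : z.im = 0 := by
    have hn : Complex.normSq z = z.re * z.re + z.im * z.im := rfl
    nlinarith
  apply Complex.ext <;> simp [h2, him]

private lemma aux_eqcase (k : ℕ) (hk : 1 ≤ k) (c : ℕ → ℕ) (hc : 1 ≤ c 0)
    (φ : ℝ) (hφpos : 0 < φ)
    (hφeq : (φ : ℝ) ^ k = ∑ i ∈ Finset.range k, (c i : ℝ) * φ ^ i)
    (η : ℂ) (hroot : η ^ k = ∑ i ∈ Finset.range k, (c i : ℂ) * η ^ i)
    (habs : ‖η‖ = φ) :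
    (η / φ) ^ k = 1 ∧ ∀ i ∈ Finset.range k, c i ≠ 0 → (η / φ) ^ i = 1 := by
  set u : ℂ := η / (φ : ℂ) with hu
  have hφC : (φ : ℂ) ≠ 0 := by exact_mod_cast hφpos.ne'
  have hηu : η = (φ : ℂ) * u := by rw [hu]; field_simp
  have huabs : ‖u‖ = 1 := by
    rw [hu, norm_div, habs, Complex.norm_real, Real.norm_eq_abs, abs_of_pos hφpos, div_self hφpos.ne']
  set v : ℂ := (starRingEnd ℂ) (u ^ k) with hv
  have hvabs : ‖v‖ = 1 := by
    rw [hv, Complex.norm_conj, norm_pow, huabs, one_pow]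
  have hukv : u ^ k * v = 1 := by
    rw [hv, Complex.mul_conj, ← Complex.sq_norm, norm_pow, huabs]; norm_num
  have heq2 : (φ : ℂ) ^ k = ∑ i ∈ Finset.range k, (c i : ℂ) * ((φ:ℂ) ^ i * (u ^ i * v)) := by
    have h5 : η ^ k * v = ∑ i ∈ Finset.range k, (c i : ℂ) * η ^ i * v := by
      rw [hroot, Finset.sum_mul]
    calc (φ : ℂ) ^ k = (φ:ℂ)^k * (u ^ k * v) := by rw [hukv, mul_one]
      _ = η ^ k * v := by rw [hηu]; ring
      _ = _ := by rw [h5]; apply Finset.sum_congr rfl; intro i hi; rw [hηu]; ring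
  have hre : (φ : ℝ) ^ k = ∑ i ∈ Finset.range k, (c i : ℝ) * (φ ^ i * (u ^ i * v).re) := by
    have := congrArg Complex.re heq2
    simpa [Complex.re_sum, ← Complex.ofReal_pow, Complex.mul_re] using this
  have hterm : ∀ i ∈ Finset.range k, c i ≠ 0 → (u ^ i * v).re = 1 := by
    have hzero : ∑ i ∈ Finset.range k, ((c i : ℝ) * φ ^ i * (1 - (u ^ i * v).re)) = 0 := by
      have h6 : ∑ i ∈ Finset.range k, ((c i : ℝ) * φ ^ i * (1 - (u ^ i * v).re))
          = (∑ i ∈ Finset.range k, (c i : ℝ) * φ ^ i)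
            - ∑ i ∈ Finset.range k, (c i : ℝ) * (φ ^ i * (u ^ i * v).re) := by
        rw [← Finset.sum_sub_distrib]; apply Finset.sum_congr rfl; intros; ring
      rw [h6, ← hφeq, ← hre, sub_self]
    have hnonneg : ∀ i ∈ Finset.range k, 0 ≤ (c i : ℝ) * φ ^ i * (1 - (u ^ i * v).re) := by
      intro i hi
      have h1 : (u ^ i * v).re ≤ 1 := by
        have := Complex.abs_re_le_norm (u ^ i * v)
        rw [norm_mul, norm_pow, huabs, hvabs] at this
        simp at this
        exact (abs_le.mp this).2
      have : 0 ≤ 1 - (u ^ i * v).re := by linarith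
      positivity
    have hall := (Finset.sum_eq_zero_iff_of_nonneg hnonneg).mp hzero
    intro i hi hci
    have hcpos : (0:ℝ) < (c i : ℝ) * φ ^ i := by
      have : (1:ℝ) ≤ (c i : ℝ) := by exact_mod_cast Nat.one_le_iff_ne_zero.mpr hci
      positivity
    have h7 : (1 : ℝ) - (u ^ i * v).re = 0 := by
      by_contra hne
      exact hne (by nlinarith [hall i hi])
    linarith
  have huiv : ∀ i ∈ Finset.range k, c i ≠ 0 → u ^ i * v = 1 := by
    intro i hi hci
    apply aux_re_one _ (hterm i hi hci)
    rw [norm_mul, norm_pow, huabs, hvabs]; norm_num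
  have h0 : v = 1 := by
    have := huiv 0 (Finset.mem_range.mpr hk) (by omega)
    simpa using this
  have huk : u ^ k = 1 := by
    have := hukv; rw [h0, mul_one] at this; exact this
  exact ⟨huk, fun i hi hci => by have := huiv i hi hci; rwa [h0, mul_one] at this⟩

private lemma aux_deriv (k : ℕ) (hk : 1 ≤ k) (c : ℕ → ℕ) (hc : 1 ≤ c 0)
    (P : Polynomial ℂ)
    (hP : P = X ^ k - ∑ i ∈ Finset.range k, C (c i : ℂ) * X ^ i)
    (φ : ℝ) (hφpos : 0 < φ)
    (hφeq : (φ : ℝ) ^ k = ∑ i ∈ Finset.range k, (c i : ℝ) * φ ^ i)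
    (η : ℂ) (hηk : η ^ k = (φ:ℂ) ^ k)
    (hηi : ∀ i ∈ Finset.range k, c i ≠ 0 → η ^ i = (φ:ℂ) ^ i) :
    ¬ (derivative P).IsRoot η := by
  intro hder
  have hevd : (derivative P).eval η
      = (k : ℂ) * η ^ (k - 1) - ∑ i ∈ Finset.range k, (c i : ℂ) * ((i : ℂ) * η ^ (i - 1)) := by
    simp [hP, derivative_sum, derivative_X_pow, eval_finset_sum]
  have hmul : η * ((derivative P).eval η)
      = (k : ℂ) * (φ:ℂ) ^ k - ∑ i ∈ Finset.range k, (c i : ℂ) * ((i : ℂ) * (φ:ℂ) ^ i) := by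
    rw [hevd, mul_sub, Finset.mul_sum]
    congr 1
    · rw [← hηk]
      calc η * ((k:ℂ) * η ^ (k-1)) = (k:ℂ) * (η ^ (k-1) * η) := by ring
        _ = (k:ℂ) * η ^ k := by rw [← pow_succ]; congr 2; omega
    · apply Finset.sum_congr rfl
      intro i hi
      rcases Nat.eq_zero_or_pos i with h0 | hipos
      · simp [h0]
      rcases Nat.eq_zero_or_pos (c i) with hc0 | hcpos
      · simp [hc0]
      have hpow : η ^ i = (φ:ℂ)^i := hηi i hi (by omega)
      calc η * ((c i:ℂ) * ((i:ℂ) * η ^ (i-1))) = (c i:ℂ) * ((i:ℂ) * (η ^ (i-1) * η)) := by ring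
        _ = (c i:ℂ) * ((i:ℂ) * η ^ i) := by rw [← pow_succ]; congr 3; omega
        _ = _ := by rw [hpow]
  have hR : 0 < (k:ℝ) * φ ^ k - ∑ i ∈ Finset.range k, (c i : ℝ) * ((i:ℝ) * φ ^ i) := by
    have h1 : (k:ℝ) * φ ^ k - ∑ i ∈ Finset.range k, (c i : ℝ) * ((i:ℝ) * φ ^ i)
        = ∑ i ∈ Finset.range k, ((k:ℝ) - i) * ((c i : ℝ) * φ ^ i) := by
      rw [hφeq, Finset.mul_sum, ← Finset.sum_sub_distrib]
      apply Finset.sum_congr rfl; intros; ring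
    rw [h1]
    have hnn : ∀ i ∈ Finset.range k, (0:ℝ) ≤ ((k:ℝ) - i) * ((c i : ℝ) * φ ^ i) := by
      intro i hi
      have hik : i < k := Finset.mem_range.mp hi
      have : (i:ℝ) ≤ (k:ℝ) := by exact_mod_cast hik.le
      have h2 : (0:ℝ) ≤ (k:ℝ) - i := by linarith
      positivity
    apply lt_of_lt_of_le ?_ (Finset.single_le_sum (f := fun i => ((k:ℝ) - i) * ((c i : ℝ) * φ ^ i)) hnn (Finset.mem_range.mpr hk))
    have hc0 : (1:ℝ) ≤ (c 0 : ℝ) := by exact_mod_cast hc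
    have hk' : (1:ℝ) ≤ (k:ℝ) := by exact_mod_cast hk
    norm_num
    nlinarith
  rw [hder, mul_zero] at hmul
  exact hR.ne' (by exact_mod_cast hmul.symm)

/-- Newton power sums of `P(z) = z^k - ∑ c_i z^i` in degrees `gn` divisible by
`g = gcd({i : c i ≠ 0} ∪ {k})` satisfy `|g·φ^{gn} - (η₁^{gn} + ⋯ + η_k^{gn})| ≤ (k-g)·ψ^{gn}`,
where `ψ` bounds the absolute values of all roots of modulus `< φ`. -/
theorem stmt_7 (k : ℕ) (hk : 1 ≤ k) (c : ℕ → ℕ) (hc : 1 ≤ c 0)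
    (P : Polynomial ℂ)
    (hP : P = X ^ k - ∑ i ∈ Finset.range k, C (c i : ℂ) * X ^ i)
    (φ : ℝ) (hφpos : 0 < φ) (hφroot : P.eval (φ : ℂ) = 0)
    (hφunique : ∀ x : ℝ, 0 < x → P.eval (x : ℂ) = 0 → x = φ)
    (g : ℕ)
    (hg : g = (((Finset.range k).filter fun i => c i ≠ 0) ∪ {k}).gcd id)
    (ψ : ℝ) (hψ0 : 0 ≤ ψ)
    (hψ : ∀ η ∈ P.roots, ‖η‖ < φ → ‖η‖ ≤ ψ) :
    ∀ n : ℕ, 0 < n →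
      ‖(g : ℂ) * (φ : ℂ) ^ (g * n) - (P.roots.map fun η => η ^ (g * n)).sum‖
        ≤ ((k : ℝ) - g) * ψ ^ (g * n) := by
  classical
  intro n hn
  have hφC : (φ : ℂ) ≠ 0 := by exact_mod_cast hφpos.ne'
  have hg0 : g ≠ 0 := by
    intro h0
    have hgk : g ∣ k := hg ▸ Finset.gcd_dvd (Finset.mem_union_right _ (Finset.mem_singleton_self k))
    rw [h0] at hgk
    omega
  have hgk : g ∣ k := hg ▸ Finset.gcd_dvd (Finset.mem_union_right _ (Finset.mem_singleton_self k))
  have hgi : ∀ i ∈ Finset.range k, c i ≠ 0 → g ∣ i := by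
    intro i hi hci
    exact hg ▸ Finset.gcd_dvd (Finset.mem_union_left _ (Finset.mem_filter.mpr ⟨hi, hci⟩))
  have hglek : g ≤ k := Nat.le_of_dvd (by omega) hgk
  have hev : ∀ z : ℂ, P.eval z = z ^ k - ∑ i ∈ Finset.range k, (c i : ℂ) * z ^ i := by
    intro z; simp [hP, eval_finset_sum]
  have hφeq : (φ : ℝ) ^ k = ∑ i ∈ Finset.range k, (c i : ℝ) * φ ^ i := by
    have h := hφroot
    rw [hev, sub_eq_zero] at h
    have h2 : ((φ ^ k : ℝ) : ℂ) = ((∑ i ∈ Finset.range k, (c i : ℝ) * φ ^ i : ℝ) : ℂ) := by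
      push_cast
      exact h
    exact_mod_cast h2
  have hQdeg : (∑ i ∈ Finset.range k, C (c i : ℂ) * X ^ i).natDegree < k := by
    have h3 : (∑ i ∈ Finset.range k, C (c i : ℂ) * X ^ i).natDegree ≤ k - 1 := by
      apply Polynomial.natDegree_sum_le_of_forall_le
      intro i hi
      apply le_trans (Polynomial.natDegree_C_mul_le _ _)
      simp only [natDegree_X_pow]
      have := Finset.mem_range.mp hi; omega
    omega
  have hdeg : P.natDegree = k := by
    rw [hP, Polynomial.natDegree_sub_eq_left_of_natDegree_lt, natDegree_X_pow]
    rwa [natDegree_X_pow]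
  have hPne : P ≠ 0 := fun h => by simp [h] at hdeg; omega
  have hcard : Multiset.card P.roots = k := by
    rw [← hdeg]
    exact Polynomial.splits_iff_card_roots.mp (IsAlgClosed.splits P)
  -- all roots have modulus ≤ φ
  have habsle : ∀ η ∈ P.roots, ‖η‖ ≤ φ := by
    intro η hη
    by_contra hcon
    push_neg at hcon
    have h1 := aux_gt k hk c hc φ hφpos hφeq (‖η‖) hcon
    have h2 : P.eval η = 0 := (Polynomial.mem_roots hPne).mp hη
    rw [hev, sub_eq_zero] at h2
    have h3 : (‖η‖) ^ k ≤ ∑ i ∈ Finset.range k, (c i : ℝ) * (‖η‖) ^ i := by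
      calc (‖η‖) ^ k = ‖η ^ k‖ := (norm_pow _ _).symm
        _ = ‖∑ i ∈ Finset.range k, (c i : ℂ) * η ^ i‖ := by rw [h2]
        _ ≤ ∑ i ∈ Finset.range k, ‖(c i : ℂ) * η ^ i‖ := norm_sum_le _ _
        _ = ∑ i ∈ Finset.range k, (c i : ℝ) * (‖η‖) ^ i := by
            apply Finset.sum_congr rfl
            intro i hi
            rw [norm_mul, norm_pow, Complex.norm_natCast]
    linarith
  -- structure of roots of modulus φ
  have hbig : ∀ η, P.eval η = 0 → ‖η‖ = φ →
      η ^ g = (φ:ℂ) ^ g ∧ η ^ k = (φ:ℂ) ^ k ∧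
        ∀ i ∈ Finset.range k, c i ≠ 0 → η ^ i = (φ:ℂ) ^ i := by
    intro η hroot hηφ
    have hroot' : η ^ k = ∑ i ∈ Finset.range k, (c i : ℂ) * η ^ i := by
      rw [hev, sub_eq_zero] at hroot; exact hroot
    obtain ⟨huk, hui⟩ := aux_eqcase k hk c hc φ hφpos hφeq η hroot' hηφ
    have hηu : η = (φ:ℂ) * (η / (φ:ℂ)) := by field_simp
    have hdvd : orderOf (η / (φ:ℂ)) ∣ g := by
      rw [hg]
      apply Finset.dvd_gcd
      intro b hb
      rcases Finset.mem_union.mp hb with hb | hb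
      · obtain ⟨hbr, hbc⟩ := Finset.mem_filter.mp hb
        exact orderOf_dvd_of_pow_eq_one (hui b hbr hbc)
      · rw [Finset.mem_singleton.mp hb]
        exact orderOf_dvd_of_pow_eq_one huk
    have hug : (η / (φ:ℂ)) ^ g = 1 := orderOf_dvd_iff_pow_eq_one.mp hdvd
    refine ⟨?_, ?_, ?_⟩
    · calc η ^ g = ((φ:ℂ) * (η / (φ:ℂ))) ^ g := by rw [← hηu]
        _ = (φ:ℂ) ^ g * ((η / (φ:ℂ)) ^ g) := mul_pow _ _ _
        _ = (φ:ℂ) ^ g := by rw [hug, mul_one]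
    · calc η ^ k = ((φ:ℂ) * (η / (φ:ℂ))) ^ k := by rw [← hηu]
        _ = (φ:ℂ) ^ k * ((η / (φ:ℂ)) ^ k) := mul_pow _ _ _
        _ = (φ:ℂ) ^ k := by rw [huk, mul_one]
    · intro i hi hci
      calc η ^ i = ((φ:ℂ) * (η / (φ:ℂ))) ^ i := by rw [← hηu]
        _ = (φ:ℂ) ^ i * ((η / (φ:ℂ)) ^ i) := mul_pow _ _ _
        _ = (φ:ℂ) ^ i := by rw [hui i hi hci, mul_one]
  -- simplicity of big roots
  have hsimple : ∀ η, ‖η‖ = φ → Multiset.count η P.roots ≤ 1 := by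
    intro η hηφ
    rw [Polynomial.count_roots]
    by_contra hcon
    push_neg at hcon
    obtain ⟨hr, hd⟩ := (one_lt_rootMultiplicity_iff_isRoot hPne).mp hcon
    obtain ⟨_, hbk, hbi⟩ := hbig η hr hηφ
    exact aux_deriv k hk c hc P hP φ hφpos hφeq η hbk hbi hd
  -- the multiset of big roots
  set B := P.roots.filter (fun η => ‖η‖ = φ) with hB
  set M := (nthRoots g (1:ℂ)).map (fun ζ => (φ:ℂ) * ζ) with hM
  have hprim := Complex.isPrimitiveRoot_exp g hg0
  have hMnodup : M.Nodup := (hprim.nthRoots_one_nodup).map (mul_right_injective₀ hφC)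
  have hBnodup : B.Nodup := by
    rw [Multiset.nodup_iff_count_le_one]
    intro a
    by_cases ha : a ∈ B
    · have h1 : ‖a‖ = φ := (Multiset.mem_filter.mp ha).2
      calc Multiset.count a B ≤ Multiset.count a P.roots :=
            Multiset.count_le_of_le a (Multiset.filter_le _ _)
        _ ≤ 1 := hsimple a h1
    · simp [Multiset.count_eq_zero_of_notMem ha]
  have hBM : B = M := by
    rw [Multiset.Nodup.ext hBnodup hMnodup]
    intro a
    constructor
    · intro haB
      obtain ⟨har, haφ⟩ := Multiset.mem_filter.mp haB
      have hroot : P.eval a = 0 := (Polynomial.mem_roots hPne).mp har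
      obtain ⟨hag, _, _⟩ := hbig a hroot haφ
      refine Multiset.mem_map.mpr ⟨a / (φ:ℂ), ?_, by field_simp⟩
      rw [Polynomial.mem_nthRoots (by omega)]
      rw [div_pow, hag, div_self (pow_ne_zero _ hφC)]
    · intro haM
      obtain ⟨ζ, hζ, rfl⟩ := Multiset.mem_map.mp haM
      have hζg : ζ ^ g = 1 := (Polynomial.mem_nthRoots (by omega : 0 < g)).mp hζ
      have hζk : ζ ^ k = 1 := by
        obtain ⟨m, rfl⟩ := hgk
        rw [pow_mul, hζg, one_pow]
      have hζabs : ‖ζ‖ = 1 := by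
        have h1 : (‖ζ‖) ^ g = 1 := by
          rw [← norm_pow, hζg, norm_one]
        rcases lt_trichotomy (‖ζ‖) 1 with hlt | heq | hgt
        · have := pow_lt_one₀ (norm_nonneg ζ) hlt hg0
          rw [h1] at this; linarith
        · exact heq
        · have := one_lt_pow₀ hgt hg0
          rw [h1] at this; linarith
      have habs : ‖(φ:ℂ) * ζ‖ = φ := by
        rw [norm_mul, Complex.norm_real, Real.norm_eq_abs, abs_of_pos hφpos, hζabs, mul_one]
      have hroot : P.eval ((φ:ℂ) * ζ) = 0 := by
        rw [hev, sub_eq_zero, mul_pow, hζk, mul_one]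
        have h4 : ∑ i ∈ Finset.range k, (c i : ℂ) * ((φ:ℂ) * ζ) ^ i
            = ∑ i ∈ Finset.range k, (c i : ℂ) * (φ:ℂ) ^ i := by
          apply Finset.sum_congr rfl
          intro i hi
          rcases Nat.eq_zero_or_pos (c i) with hc0 | hcpos
          · simp [hc0]
          have hζi : ζ ^ i = 1 := by
            obtain ⟨m, rfl⟩ := hgi i hi (by omega)
            rw [pow_mul, hζg, one_pow]
          rw [mul_pow, hζi, mul_one]
        rw [h4]
        have h5 : ((φ ^ k : ℝ) : ℂ) = ((∑ i ∈ Finset.range k, (c i : ℝ) * φ ^ i : ℝ) : ℂ) := by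
          exact_mod_cast hφeq
        push_cast at h5
        exact h5
      exact Multiset.mem_filter.mpr ⟨(Polynomial.mem_roots hPne).mpr hroot, habs⟩
  have hcardB : Multiset.card B = g := by
    rw [hBM, hM, Multiset.card_map, hprim.card_nthRoots_one]
  set S := P.roots.filter (fun η => ¬ ‖η‖ = φ) with hS
  have hsplit : B + S = P.roots := Multiset.filter_add_not _ _
  have hcardS : Multiset.card S = k - g := by
    have h6 := congrArg Multiset.card hsplit
    rw [Multiset.card_add, hcardB, hcard] at h6
    omega
  -- sum over big roots
  have hBsum : ((B.map fun η => η ^ (g * n)).sum) = (g : ℂ) * (φ:ℂ) ^ (g * n) := by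
    have hcongr : ∀ η ∈ B, η ^ (g * n) = (φ:ℂ) ^ (g * n) := by
      intro η hη
      obtain ⟨har, haφ⟩ := Multiset.mem_filter.mp hη
      obtain ⟨hag, _, _⟩ := hbig η ((Polynomial.mem_roots hPne).mp har) haφ
      rw [pow_mul, hag, ← pow_mul]
    rw [Multiset.map_congr rfl hcongr, Multiset.map_const', Multiset.sum_replicate, hcardB,
      nsmul_eq_mul]
  have hsumsplit : (P.roots.map fun η => η ^ (g * n)).sum
      = ((B.map fun η => η ^ (g * n)).sum) + ((S.map fun η => η ^ (g * n)).sum) := by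
    rw [← hsplit, Multiset.map_add, Multiset.sum_add]
  rw [hsumsplit, hBsum]
  have h7 : (g : ℂ) * (φ:ℂ) ^ (g * n) - ((g : ℂ) * (φ:ℂ) ^ (g * n) + (S.map fun η => η ^ (g * n)).sum)
      = -((S.map fun η => η ^ (g * n)).sum) := by ring
  rw [h7, norm_neg]
  calc ‖(S.map fun η => η ^ (g * n)).sum‖
      ≤ (((S.map fun η => η ^ (g * n)).map (fun z : ℂ => ‖z‖)).sum) :=
        Multiset.le_sum_of_subadditive (fun z : ℂ => ‖z‖) norm_zero.le norm_add_le _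
    _ = ((S.map fun η => ‖η ^ (g * n)‖).sum) := by rw [Multiset.map_map]; rfl
    _ ≤ ((S.map fun _ => ψ ^ (g * n)).sum) := by
        apply Multiset.sum_map_le_sum_map
        intro η hη
        obtain ⟨har, haφ⟩ := Multiset.mem_filter.mp hη
        have h8 : ‖η‖ < φ := lt_of_le_of_ne (habsle η har) haφ
        have h9 : ‖η‖ ≤ ψ := hψ η har h8
        rw [norm_pow]
        exact pow_le_pow_left₀ (norm_nonneg η) h9 _
    _ = ((k : ℝ) - g) * ψ ^ (g * n) := by
        rw [Multiset.map_const', Multiset.sum_replicate, hcardS, nsmul_eq_mul]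
        congr 1
        push_cast [Nat.cast_sub hglek]
        ring
end

section
/- Let k ≥ 1 and let c_0, …, c_{k−1} be nonnegative integers with c_0 ≥ 1. Let P(z) = z^k − Σ_{i=0}^{k−1} c_i z^i, let η_1, …, η_k be its complex roots listed with multiplicity, let φ be its unique positive real root, and let g = gcd({i : c_i ≠ 0} ∪ {k}). Then the limit as n → ∞ of (η_1^{gn} + ⋯ + η_k^{gn}) / φ^{gn} equals g. -/
open Polynomial

noncomputable def Complex.abs : AbsoluteValue ℂ ℝ :=
  IsAbsoluteValue.toAbsoluteValue (norm : ℂ → ℝ)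

theorem Complex.abs_apply' (z : ℂ) : Complex.abs z = ‖z‖ := rfl

theorem Complex.norm_eq_abs (z : ℂ) : ‖z‖ = Complex.abs z := rfl

theorem Complex.abs_ofReal (r : ℝ) : Complex.abs (r : ℂ) = |r| := by
  rw [Complex.abs_apply', Complex.norm_real, Real.norm_eq_abs]

theorem Complex.abs_conj (z : ℂ) : Complex.abs ((starRingEnd ℂ) z) = Complex.abs z := by
  rw [Complex.abs_apply', Complex.abs_apply', Complex.norm_conj]

theorem Complex.abs_natCast (n : ℕ) : Complex.abs (n : ℂ) = n := by
  rw [Complex.abs_apply', Complex.norm_natCast]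

theorem Complex.sq_abs (z : ℂ) : Complex.abs z ^ 2 = Complex.normSq z := by
  rw [Complex.abs_apply', Complex.sq_norm]

theorem Complex.re_le_abs (z : ℂ) : z.re ≤ Complex.abs z := Complex.re_le_norm z

private lemma aux_abs_one {g : ℕ} (hg : 0 < g) (z : ℂ) (hz : z ^ g = 1) :
    Complex.abs z = 1 := by
  have h1 : Complex.abs z ^ g = 1 := by rw [← map_pow, hz, map_one]
  rcases lt_trichotomy (Complex.abs z) 1 with h | h | h
  · have := pow_lt_one₀ (AbsoluteValue.nonneg _ z) h (show g ≠ 0 by omega)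
    linarith
  · exact h
  · have := one_lt_pow₀ h (show g ≠ 0 by omega)
    linarith

private lemma aux_bound (k : ℕ) (hk : 1 ≤ k) (c : ℕ → ℕ) (φ : ℝ) (hφpos : 0 < φ)
    (hsumφ : ∑ i ∈ Finset.range k, (c i : ℝ) * φ ^ i = φ ^ k)
    (x : ℝ) (hx : 0 < x)
    (hle : x ^ k ≤ ∑ i ∈ Finset.range k, (c i : ℝ) * x ^ i) : x ≤ φ := by
  by_contra hgt
  push_neg at hgt
  set t : ℝ := x / φ with ht
  have ht1 : 1 < t := (one_lt_div hφpos).2 hgt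
  have hxt : x = φ * t := by rw [ht, mul_div_cancel₀ _ hφpos.ne']
  have h1 : ∑ i ∈ Finset.range k, (c i : ℝ) * x ^ i ≤ φ ^ k * t ^ (k - 1) := by
    calc ∑ i ∈ Finset.range k, (c i : ℝ) * x ^ i
        ≤ ∑ i ∈ Finset.range k, (c i : ℝ) * φ ^ i * t ^ (k - 1) := by
          apply Finset.sum_le_sum
          intro i hi
          have hik : i ≤ k - 1 := by
            have := Finset.mem_range.1 hi; omega
          have hti : t ^ i ≤ t ^ (k - 1) := pow_le_pow_right₀ ht1.le hik
          have hci : (0:ℝ) ≤ (c i : ℝ) * φ ^ i := by positivity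
          calc (c i : ℝ) * x ^ i = (c i : ℝ) * φ ^ i * t ^ i := by
                rw [hxt, mul_pow]; ring
            _ ≤ (c i : ℝ) * φ ^ i * t ^ (k - 1) := by
                exact mul_le_mul_of_nonneg_left hti hci
      _ = φ ^ k * t ^ (k - 1) := by rw [← Finset.sum_mul, hsumφ]
  have h2 : φ ^ k * t ^ (k - 1) < φ ^ k * t ^ k := by
    have : t ^ (k - 1) < t ^ k := pow_lt_pow_right₀ ht1 (by omega)
    exact mul_lt_mul_of_pos_left this (by positivity)
  have h3 : φ ^ k * t ^ k = x ^ k := by rw [hxt, mul_pow]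
  linarith

private lemma aux_tendsto (φ : ℝ) (hφpos : 0 < φ) (g : ℕ) (hg : 0 < g)
    (N : Multiset ℂ) (hN : ∀ η ∈ N, Complex.abs η < φ) :
    Filter.Tendsto (fun n : ℕ => (N.map (fun η => (η / (φ:ℂ)) ^ (g * n))).sum)
      Filter.atTop (nhds 0) := by
  induction N using Multiset.induction_on with
  | empty => simpa using (tendsto_const_nhds : Filter.Tendsto (fun _ : ℕ => (0:ℂ)) _ _)
  | cons a s ih =>
    have h1 : Filter.Tendsto (fun n : ℕ => (a / (φ:ℂ)) ^ (g * n)) Filter.atTop (nhds 0) := by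
      have hlt : ‖a / (φ:ℂ)‖ < 1 := by
        rw [Complex.norm_eq_abs, map_div₀, Complex.abs_ofReal, abs_of_pos hφpos,
          div_lt_one hφpos]
        exact hN a (Multiset.mem_cons_self a s)
      exact (tendsto_pow_atTop_nhds_zero_of_norm_lt_one hlt).comp
        (Filter.tendsto_atTop_mono (fun n => Nat.le_mul_of_pos_left n hg) Filter.tendsto_id)
    have h2 := ih (fun η hη => hN η (Multiset.mem_cons_of_mem hη))
    simpa [Multiset.map_cons, Multiset.sum_cons] using h1.add h2

/-- With `P(z) = z^k - ∑ c_i z^i`, roots `η₁, …, η_k` with multiplicity, `φ` its unique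
positive real root and `g = gcd({i : c i ≠ 0} ∪ {k})`, the limit as `n → ∞` of
`(η₁^{gn} + ⋯ + η_k^{gn}) / φ^{gn}` equals `g`. -/
theorem stmt_8 (k : ℕ) (hk : 1 ≤ k) (c : ℕ → ℕ) (hc : 1 ≤ c 0)
    (P : Polynomial ℂ)
    (hP : P = X ^ k - ∑ i ∈ Finset.range k, C (c i : ℂ) * X ^ i)
    (φ : ℝ) (hφpos : 0 < φ) (hφroot : P.eval (φ : ℂ) = 0)
    (hφunique : ∀ x : ℝ, 0 < x → P.eval (x : ℂ) = 0 → x = φ)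
    (g : ℕ)
    (hg : g = (((Finset.range k).filter fun i => c i ≠ 0) ∪ {k}).gcd id) :
    Filter.Tendsto
      (fun n : ℕ => (P.roots.map fun η => η ^ (g * n)).sum / (φ : ℂ) ^ (g * n))
      Filter.atTop (nhds (g : ℂ)) := by
  classical
  have hkS : k ∈ ((Finset.range k).filter fun i => c i ≠ 0) ∪ {k} :=
    Finset.mem_union_right _ (Finset.mem_singleton_self k)
  have hgk : g ∣ k := by rw [hg]; exact Finset.gcd_dvd hkS
  have hg0 : 0 < g := by
    rcases Nat.eq_zero_or_pos g with h | h
    · exfalso; rw [h] at hgk; omega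
    · exact h
  have hφC : (φ:ℂ) ≠ 0 := by exact_mod_cast hφpos.ne'
  have hevalP : ∀ z : ℂ, P.eval z = z ^ k - ∑ i ∈ Finset.range k, (c i : ℂ) * z ^ i := by
    intro z; simp [hP, eval_finset_sum]
  -- real root equation
  have hsumφ : ∑ i ∈ Finset.range k, (c i : ℝ) * φ ^ i = φ ^ k := by
    have h := hφroot
    rw [hevalP, sub_eq_zero] at h
    have h2 : ((∑ i ∈ Finset.range k, (c i : ℝ) * φ ^ i : ℝ) : ℂ) = ((φ ^ k : ℝ) : ℂ) := by
      push_cast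
      exact h.symm
    exact_mod_cast h2
  have hCsum : ((φ:ℂ)) ^ k = ∑ i ∈ Finset.range k, (c i : ℂ) * (φ:ℂ) ^ i := by
    have := congrArg (fun x : ℝ => (x : ℂ)) hsumφ
    push_cast at this
    exact this.symm
  -- P is nonzero
  have heval0 : P.eval 0 = -(c 0 : ℂ) := by
    rw [hevalP]
    rw [Finset.sum_eq_single_of_mem 0 (Finset.mem_range.2 (by omega))
      (fun i _ hne => by simp [zero_pow hne])]
    simp [zero_pow (show k ≠ 0 by omega)]
  have hP0 : P ≠ 0 := by
    intro h
    rw [h, eval_zero] at heval0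
    have hcc : (c 0 : ℂ) = 0 := by linear_combination heval0
    have : c 0 = 0 := by exact_mod_cast hcc
    omega
  -- all roots lie in the closed disc of radius φ
  have habs_le : ∀ η : ℂ, P.eval η = 0 → Complex.abs η ≤ φ := by
    intro η hη
    rcases eq_or_ne η 0 with rfl | hη0
    · simpa using hφpos.le
    have hpos : 0 < Complex.abs η := AbsoluteValue.pos _ hη0
    apply aux_bound k hk c φ hφpos hsumφ _ hpos
    have heq : η ^ k = ∑ i ∈ Finset.range k, (c i : ℂ) * η ^ i := by
      have := hη; rw [hevalP, sub_eq_zero] at this; exact this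
    calc Complex.abs η ^ k = Complex.abs (η ^ k) := (map_pow _ _ _).symm
      _ = Complex.abs (∑ i ∈ Finset.range k, (c i:ℂ) * η ^ i) := by rw [heq]
      _ ≤ ∑ i ∈ Finset.range k, Complex.abs ((c i:ℂ) * η ^ i) :=
          Complex.abs.sum_le _ _
      _ = ∑ i ∈ Finset.range k, (c i : ℝ) * Complex.abs η ^ i := by
          apply Finset.sum_congr rfl
          intro i _
          rw [map_mul, map_pow, Complex.abs_natCast]
  -- structure of the roots on the circle |z| = φ
  have hcirc : ∀ η : ℂ, P.eval η = 0 → Complex.abs η = φ →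
      (∀ i ∈ Finset.range k, c i ≠ 0 → η ^ i = (φ:ℂ) ^ i) ∧ η ^ k = (φ:ℂ) ^ k := by
    intro η hη habs
    have heq : η ^ k = ∑ i ∈ Finset.range k, (c i : ℂ) * η ^ i := by
      have := hη; rw [hevalP, sub_eq_zero] at this; exact this
    set w : ℂ := (starRingEnd ℂ) (η ^ k) / (φ:ℂ) ^ k with hw
    have hηk_abs : Complex.abs (η ^ k) = φ ^ k := by rw [map_pow, habs]
    have hwabs : Complex.abs w = 1 := by
      rw [hw, map_div₀, Complex.abs_conj, hηk_abs, map_pow, Complex.abs_ofReal,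
        abs_of_pos hφpos, div_self (by positivity)]
    have hmulw : η ^ k * w = ((φ ^ k : ℝ) : ℂ) := by
      rw [hw, mul_div_assoc']
      rw [Complex.mul_conj]
      rw [show Complex.normSq (η ^ k) = ((φ ^ k) ^ 2 : ℝ) from by
        rw [← Complex.sq_abs, hηk_abs]]
      push_cast
      rw [sq]
      rw [mul_div_assoc, div_self (pow_ne_zero _ hφC), mul_one]
    have hre : ∀ i ∈ Finset.range k,
        (c i : ℝ) * ((η ^ i * w).re) ≤ (c i : ℝ) * φ ^ i := by
      intro i _
      have h1 : (η ^ i * w).re ≤ Complex.abs (η ^ i * w) := Complex.re_le_abs _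
      have h2 : Complex.abs (η ^ i * w) = φ ^ i := by
        rw [map_mul, map_pow, habs, hwabs, mul_one]
      exact mul_le_mul_of_nonneg_left (h2 ▸ h1) (Nat.cast_nonneg _)
    have hsum_re : ∑ i ∈ Finset.range k, (c i : ℝ) * ((η ^ i * w).re)
        = ∑ i ∈ Finset.range k, (c i : ℝ) * φ ^ i := by
      have hL : ∑ i ∈ Finset.range k, (c i : ℝ) * ((η ^ i * w).re)
          = ((∑ i ∈ Finset.range k, (c i : ℂ) * η ^ i) * w).re := by
        rw [Finset.sum_mul, Complex.re_sum]
        apply Finset.sum_congr rfl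
        intro i _
        simp [mul_assoc, Complex.mul_re]
      rw [hL, ← heq, hmulw, Complex.ofReal_re, hsumφ]
    have hterm := (Finset.sum_eq_sum_iff_of_le hre).1 hsum_re
    have hkey : ∀ i ∈ Finset.range k, c i ≠ 0 → η ^ i * w = ((φ:ℂ)) ^ i := by
      intro i hi hci
      have h1 : (c i : ℝ) * ((η ^ i * w).re) = (c i : ℝ) * φ ^ i := hterm i hi
      have hci' : (c i : ℝ) ≠ 0 := Nat.cast_ne_zero.2 hci
      have h2 : (η ^ i * w).re = φ ^ i := by
        exact mul_left_cancel₀ hci' h1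
      have h3 : Complex.abs (η ^ i * w) = φ ^ i := by
        rw [map_mul, map_pow, habs, hwabs, mul_one]
      have him : (η ^ i * w).im = 0 := by
        have hsq := Complex.sq_abs (η ^ i * w)
        rw [h3, Complex.normSq_apply, ← h2] at hsq
        have h6 : (η ^ i * w).im * (η ^ i * w).im = 0 := by nlinarith [hsq]
        exact mul_self_eq_zero.1 h6
      have : η ^ i * w = (((η ^ i * w).re : ℝ) : ℂ) := by
        apply Complex.ext
        · simp
        · simp [him]
      rw [this, h2]
      push_cast
      ring
    have hw1 : w = 1 := by
      have h0 := hkey 0 (Finset.mem_range.2 (by omega)) (by omega)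
      simpa using h0
    constructor
    · intro i hi hci
      have := hkey i hi hci
      rwa [hw1, mul_one] at this
    · have := hmulw
      rw [hw1, mul_one] at this
      rw [this]
      push_cast
      ring
  -- roots on the circle satisfy (η/φ)^g = 1
  have hzeta : ∀ η : ℂ, P.eval η = 0 → Complex.abs η = φ → (η / (φ:ℂ)) ^ g = 1 := by
    intro η hη habs
    obtain ⟨h1, h2⟩ := hcirc η hη habs
    have hζpow : ∀ i ∈ ((Finset.range k).filter fun i => c i ≠ 0) ∪ {k},
        (η / (φ:ℂ)) ^ i = 1 := by
      intro i hi
      rcases Finset.mem_union.1 hi with hi' | hi'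
      · obtain ⟨hir, hic⟩ := Finset.mem_filter.1 hi'
        rw [div_pow, h1 i hir hic, div_self (pow_ne_zero _ hφC)]
      · rw [Finset.mem_singleton.1 hi', div_pow, h2, div_self (pow_ne_zero _ hφC)]
    have hdvd : orderOf (η / (φ:ℂ)) ∣ g := by
      rw [hg]
      exact Finset.dvd_gcd (fun b hb => orderOf_dvd_of_pow_eq_one (hζpow b hb))
    exact orderOf_dvd_iff_pow_eq_one.1 hdvd
  -- conversely, every φ·ζ with ζ^g = 1 is a root
  have hroot' : ∀ ζ : ℂ, ζ ^ g = 1 → P.eval ((φ:ℂ) * ζ) = 0 := by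
    intro ζ hζ
    rw [hevalP, sub_eq_zero]
    have hζk : ζ ^ k = 1 := by
      obtain ⟨m, rfl⟩ := hgk
      rw [pow_mul, hζ, one_pow]
    have hsum : ∑ i ∈ Finset.range k, (c i : ℂ) * ((φ:ℂ) * ζ) ^ i
        = ∑ i ∈ Finset.range k, (c i : ℂ) * (φ:ℂ) ^ i := by
      apply Finset.sum_congr rfl
      intro i hi
      rcases eq_or_ne (c i) 0 with h0 | h0
      · simp [h0]
      · have hiS : i ∈ ((Finset.range k).filter fun i => c i ≠ 0) ∪ {k} :=
          Finset.mem_union_left _ (Finset.mem_filter.2 ⟨hi, h0⟩)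
        have hgi : g ∣ i := by rw [hg]; exact Finset.gcd_dvd hiS
        obtain ⟨m, rfl⟩ := hgi
        have hζi : ζ ^ (g * m) = 1 := by rw [pow_mul, hζ, one_pow]
        rw [mul_pow, hζi, mul_one]
    rw [hsum, mul_pow, hζk, mul_one]
    exact hCsum.symm ▸ hCsum
  -- roots on the circle are simple
  have hderiv : derivative P = C (k:ℂ) * X ^ (k - 1)
      - ∑ i ∈ Finset.range k, C (c i : ℂ) * (C (i:ℂ) * X ^ (i - 1)) := by
    rw [hP, derivative_sub, derivative_X_pow, derivative_sum]
    congr 1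
    apply Finset.sum_congr rfl
    intro i _
    rw [derivative_C_mul, derivative_X_pow]
  have hsimple : ∀ η : ℂ, P.eval η = 0 → Complex.abs η = φ →
      rootMultiplicity η P ≤ 1 := by
    intro η hη habs
    by_contra hlt
    push_neg at hlt
    have h1 : 1 ≤ rootMultiplicity η (derivative P) := by
      have := P.rootMultiplicity_sub_one_le_derivative_rootMultiplicity η
      omega
    have hroot'' : (derivative P).eval η = 0 := by
      have hd := Polynomial.rootMultiplicity_pos'.1 (by omega : 0 < rootMultiplicity η (derivative P))
      exact hd.2
    obtain ⟨hsupp, hk'⟩ := hcirc η hη habs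
    have hkey : η * (derivative P).eval η =
        (k:ℂ) * (φ:ℂ) ^ k - ∑ i ∈ Finset.range k, (c i : ℂ) * ((i:ℂ) * (φ:ℂ) ^ i) := by
      rw [hderiv]
      simp only [eval_sub, eval_mul, eval_pow, eval_C, eval_X, eval_finset_sum]
      rw [mul_sub, Finset.mul_sum]
      congr 1
      · rw [show η * ((k:ℂ) * η ^ (k - 1)) = (k:ℂ) * (η ^ (k - 1) * η) by ring,
          ← pow_succ, Nat.sub_add_cancel hk, hk']
      · apply Finset.sum_congr rfl
        intro i hi
        rcases Nat.eq_zero_or_pos i with rfl | hipos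
        · simp
        rcases eq_or_ne (c i) 0 with h0 | h0
        · simp [h0]
        · rw [show η * ((c i : ℂ) * ((i:ℂ) * η ^ (i - 1)))
              = (c i : ℂ) * ((i:ℂ) * (η ^ (i - 1) * η)) by ring,
            ← pow_succ, Nat.sub_add_cancel hipos, hsupp i hi h0]
    have hDr : (0:ℝ) < (k:ℝ) * φ ^ k
        - ∑ i ∈ Finset.range k, (c i : ℝ) * ((i:ℝ) * φ ^ i) := by
      rw [← hsumφ, Finset.mul_sum, ← Finset.sum_sub_distrib]
      have hnn : ∀ i ∈ Finset.range k,
          0 ≤ (k:ℝ) * ((c i : ℝ) * φ ^ i) - (c i : ℝ) * ((i:ℝ) * φ ^ i) := by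
        intro i hi
        have hik : (i:ℝ) ≤ (k:ℝ) := by
          exact_mod_cast (Finset.mem_range.1 hi).le
        have h1 : (0:ℝ) ≤ (c i : ℝ) * φ ^ i := by positivity
        nlinarith
      have h00 : (0:ℝ) < (k:ℝ) * ((c 0 : ℝ) * φ ^ 0) - (c 0 : ℝ) * ((0:ℝ) * φ ^ 0) := by
        have hc0 : (1:ℝ) ≤ (c 0 : ℝ) := by exact_mod_cast hc
        have hk0 : (1:ℝ) ≤ (k:ℝ) := by exact_mod_cast hk
        simp only [pow_zero, mul_one, zero_mul, mul_zero, sub_zero]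
        nlinarith
      calc (0:ℝ) < (k:ℝ) * ((c 0 : ℝ) * φ ^ 0) - (c 0 : ℝ) * ((0:ℝ) * φ ^ 0) := h00
        _ ≤ ∑ i ∈ Finset.range k,
            ((k:ℝ) * ((c i : ℝ) * φ ^ i) - (c i : ℝ) * ((i:ℝ) * φ ^ i)) := by
            have := Finset.single_le_sum hnn (Finset.mem_range.2 (by omega : 0 < k))
            simpa using this
    have hD : (k:ℂ) * (φ:ℂ) ^ k
        - ∑ i ∈ Finset.range k, (c i : ℂ) * ((i:ℂ) * (φ:ℂ) ^ i) ≠ 0 := by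
      have hcast : (k:ℂ) * (φ:ℂ) ^ k
          - ∑ i ∈ Finset.range k, (c i : ℂ) * ((i:ℂ) * (φ:ℂ) ^ i)
          = (((k:ℝ) * φ ^ k - ∑ i ∈ Finset.range k, (c i : ℝ) * ((i:ℝ) * φ ^ i) : ℝ) : ℂ) := by
        push_cast
        ring
      rw [hcast]
      exact_mod_cast hDr.ne'
    rw [hroot'', mul_zero] at hkey
    exact hD hkey.symm
  have hcount1 : ∀ η : ℂ, P.eval η = 0 → Complex.abs η = φ → P.roots.count η = 1 := by
    intro η hη habs
    rw [Polynomial.count_roots]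
    have h1 : 0 < rootMultiplicity η P := (Polynomial.rootMultiplicity_pos hP0).2 hη
    have h2 := hsimple η hη habs
    omega
  -- the finset of circle roots
  have hprim : IsPrimitiveRoot (Complex.exp (2 * Real.pi * Complex.I / g)) g :=
    Complex.isPrimitiveRoot_exp g (by omega)
  set T : Finset ℂ := (Polynomial.nthRootsFinset g (1:ℂ)).image (fun ζ => (φ:ℂ) * ζ) with hT
  have hTcard : T.card = g := by
    rw [hT, Finset.card_image_of_injective _ (mul_right_injective₀ hφC),
      hprim.card_nthRootsFinset]
  have hmemT : ∀ x : ℂ, x ∈ T ↔ ∃ ζ : ℂ, ζ ^ g = 1 ∧ (φ:ℂ) * ζ = x := by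
    intro x
    rw [hT]
    simp only [Finset.mem_image]
    constructor
    · rintro ⟨ζ, hζ, rfl⟩
      exact ⟨ζ, (Polynomial.mem_nthRootsFinset (by omega) 1).1 hζ, rfl⟩
    · rintro ⟨ζ, h1, rfl⟩
      exact ⟨ζ, (Polynomial.mem_nthRootsFinset (by omega) 1).2 h1, rfl⟩
  have hfilter : P.roots.filter (fun x => Complex.abs x = φ) = T.val := by
    apply Multiset.ext.2
    intro x
    rw [Multiset.count_filter]
    by_cases hx : x ∈ T
    · obtain ⟨ζ, hζg, hxz⟩ := (hmemT x).1 hx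
      have habsx : Complex.abs x = φ := by
        rw [← hxz, map_mul, Complex.abs_ofReal, abs_of_pos hφpos,
          aux_abs_one hg0 ζ hζg, mul_one]
      rw [if_pos habsx]
      have hxr : P.eval x = 0 := by rw [← hxz]; exact hroot' ζ hζg
      rw [hcount1 x hxr habsx]
      exact (Multiset.count_eq_one_of_mem T.nodup hx).symm
    · have hxv : x ∉ T.val := hx
      rw [Multiset.count_eq_zero_of_notMem hxv]
      by_cases habsx : Complex.abs x = φ
      · rw [if_pos habsx]
        have hx0 : x ∉ P.roots := by
          intro hmem
          have hxroot : P.eval x = 0 := ((Polynomial.mem_roots hP0).1 hmem)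
          have hζ := hzeta x hxroot habsx
          exact hx ((hmemT x).2 ⟨x / φ, hζ, by field_simp⟩)
        rw [Multiset.count_eq_zero_of_notMem hx0]
      · rw [if_neg habsx]
  -- split the sum
  have hsplit : ∀ n : ℕ,
      (P.roots.map fun η => η ^ (g * n)).sum / (φ:ℂ) ^ (g * n)
      = (g:ℂ) + ((P.roots.filter (fun x => ¬ Complex.abs x = φ)).map
          (fun η => (η / (φ:ℂ)) ^ (g * n))).sum := by
    intro n
    have hpow0 : ((φ:ℂ)) ^ (g * n) ≠ 0 := pow_ne_zero _ hφC
    have step1 : (P.roots.map fun η => η ^ (g * n)).sum / (φ:ℂ) ^ (g * n)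
        = (P.roots.map fun η => (η / (φ:ℂ)) ^ (g * n)).sum := by
      rw [div_eq_mul_inv, ← Multiset.sum_map_mul_right]
      apply congrArg
      apply Multiset.map_congr rfl
      intro x _
      rw [div_pow, div_eq_mul_inv]
    rw [step1]
    conv_lhs => rw [← Multiset.filter_add_not (fun x => Complex.abs x = φ) P.roots]
    rw [Multiset.map_add, Multiset.sum_add, hfilter]
    congr 1
    have hone : ∀ x ∈ T.val, (x / (φ:ℂ)) ^ (g * n) = (1:ℂ) := by
      intro x hx
      obtain ⟨ζ, hζg, hxz⟩ := (hmemT x).1 hx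
      have : x / (φ:ℂ) = ζ := by rw [← hxz]; field_simp
      rw [this, pow_mul, hζg, one_pow]
    rw [Multiset.map_congr rfl hone, Multiset.map_const', Multiset.sum_replicate,
      ← Finset.card_def, hTcard, nsmul_eq_mul, mul_one]
  -- remaining roots are strictly inside the circle
  have hNlt : ∀ η ∈ P.roots.filter (fun x => ¬ Complex.abs x = φ), Complex.abs η < φ := by
    intro η hη
    rw [Multiset.mem_filter] at hη
    exact lt_of_le_of_ne (habs_le η ((Polynomial.mem_roots hP0).1 hη.1)) hη.2
  have htail := aux_tendsto φ hφpos g hg0 _ hNlt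
  have hfinal := (tendsto_const_nhds : Filter.Tendsto (fun _ : ℕ => (g:ℂ)) Filter.atTop _).add htail
  rw [add_zero] at hfinal
  exact Filter.Tendsto.congr (fun n => (hsplit n).symm) hfinal
end

section
/- Let ℓ ≥ 1, let q_1 < q_2 < ⋯ < q_ℓ be positive integers, and let m_1, …, m_ℓ be positive integers. Let P(z) = z^{q_ℓ} − Σ_{i=1}^ℓ m_i z^{q_ℓ − q_i}, let η_1, …, η_{q_ℓ} be its complex roots listed with multiplicity, for M ≥ 1 set S_M = η_1^M + ⋯ + η_{q_ℓ}^M, let φ be the unique positive real root of P, let g = gcd(q_1, …, q_ℓ), and let ψ ≥ 0 be a real number such that |η| ≤ ψ for every complex root η of P with |η| < φ. Then for every integer N ≥ 2, |(1/N)·Σ_{d | N, d ≥ 2} (−1)^{N/d} μ(d) S_{N/d}| ≤ g·φ^{N/2} + q_ℓ·ψ^{N/2}, where μ is the Möbius function and the sum runs over the divisors d of N with d ≥ 2. -/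
set_option maxHeartbeats 1000000


open Polynomial

lemma aux_log_le (y : ℝ) (hy : 1 ≤ y) : Real.log y ≤ y / 2 := by
  have hy0 : (0:ℝ) < y := by linarith
  have hs : Real.log (Real.sqrt y) ≤ Real.sqrt y - 1 :=
    Real.log_le_sub_one_of_pos (Real.sqrt_pos.mpr hy0)
  rw [Real.log_sqrt hy0.le] at hs
  have hsq : (0:ℝ) ≤ (Real.sqrt y - 2)^2 := sq_nonneg _
  have h2 : Real.sqrt y ^ 2 = y := Real.sq_sqrt hy0.le
  nlinarith [Real.sqrt_nonneg y]

lemma aux_xx (x : ℝ) (h0 : 0 < x) (h1 : x < 1) : (1/2 : ℝ) ≤ x ^ x := by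
  have hlog : -(1/2 : ℝ) ≤ x * Real.log x := by
    have hinv : 1 ≤ 1/x := by rw [le_div_iff₀ h0]; linarith
    have := aux_log_le (1/x) hinv
    rw [Real.log_div one_ne_zero h0.ne', Real.log_one] at this
    -- this : -log x ≤ (1/x)/2
    have hx2 : x * (1/x) = 1 := by field_simp
    nlinarith
  have : x ^ x = Real.exp (x * Real.log x) := by
    rw [Real.rpow_def_of_pos h0, mul_comm]
  rw [this]
  have h2 : Real.exp (-(1/2:ℝ)) ≤ Real.exp (x * Real.log x) := Real.exp_le_exp.mpr hlog
  refine le_trans ?_ h2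
  rw [show (1/2:ℝ) = 2⁻¹ by norm_num, Real.exp_neg]
  have h3 : Real.exp (2⁻¹:ℝ) ≤ 2 := by
    have h4 : Real.exp (2⁻¹:ℝ) * Real.exp (2⁻¹:ℝ) = Real.exp 1 := by
      rw [← Real.exp_add]; norm_num
    nlinarith [Real.exp_pos (2⁻¹:ℝ), Real.exp_one_lt_d9]
  have h5 : (Real.exp (2⁻¹:ℝ))⁻¹ * Real.exp (2⁻¹:ℝ) = 1 :=
    inv_mul_cancel₀ (Real.exp_pos _).ne'
  nlinarith [Real.exp_pos (2⁻¹:ℝ)]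

lemma aux_amgm (g k t : ℝ) (hg : 1 ≤ g) (hk : 0 < k) (ht : 1 ≤ t) :
    k ≤ g * t + 2 * k * t ^ (-(g / k)) := by
  rcases le_or_gt k (g * t) with h | h
  · have : (0:ℝ) ≤ 2 * k * t ^ (-(g/k)) := by positivity
    linarith
  · -- g * t < k, so t < k / g, and x := g/k < 1
    have ht0 : (0:ℝ) < t := by linarith
    have hx0 : (0:ℝ) < g / k := by positivity
    have hx1 : g / k < 1 := by
      rw [div_lt_one hk]; nlinarith
    have htlt : t < k / g := by
      rw [lt_div_iff₀ (by linarith : (0:ℝ) < g)]; nlinarith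
    -- t ^ (-(g/k)) ≥ (k/g) ^ (-(g/k)) = (g/k)^(g/k) ≥ 1/2
    have h1 : (k / g) ^ (-(g/k)) ≤ t ^ (-(g/k)) := by
      apply Real.rpow_le_rpow_of_nonpos ht0 htlt.le (by linarith)
    have h2 : (k / g) ^ (-(g/k)) = (g / k) ^ (g/k) := by
      rw [Real.rpow_neg (by positivity), ← Real.inv_rpow (by positivity), inv_div]
    have h3 := aux_xx (g/k) hx0 hx1
    rw [h2] at h1
    nlinarith


lemma aux_prod_le' (c : ℝ) (hc : 0 ≤ c) : ∀ (s : Multiset ℝ),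
    (∀ x ∈ s, 0 ≤ x ∧ x ≤ c) → s.prod ≤ c ^ Multiset.card s := by
  intro s
  induction s using Multiset.induction with
  | empty => simp
  | cons a s ih =>
    intro h
    rw [Multiset.prod_cons, Multiset.card_cons, pow_succ']
    have ha := h a (Multiset.mem_cons_self a s)
    have hs : ∀ x ∈ s, 0 ≤ x ∧ x ≤ c := fun x hx => h x (Multiset.mem_cons_of_mem hx)
    apply mul_le_mul ha.2 (ih hs) (Multiset.prod_nonneg (fun x hx => (hs x hx).1)) hc


/-- Bound on the error term (`d ≥ 2` part of Babenko's formula): with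
`P(z) = z^{q_ℓ} - ∑ m_i z^{q_ℓ - q_i}`, Newton sums `S_M`, unique positive real root `φ`,
`g = gcd(q_1, …, q_ℓ)`, and `ψ` bounding the moduli of roots of modulus `< φ`, for every
`N ≥ 2` we have
`|(1/N)·∑_{d ∣ N, d ≥ 2} (-1)^{N/d} μ(d) S_{N/d}| ≤ g·φ^{N/2} + q_ℓ·ψ^{N/2}`. -/
theorem stmt_9 (ℓ : ℕ) (hℓ : 1 ≤ ℓ) (q m : Fin ℓ → ℕ)
    (hqmono : StrictMono q) (hqpos : ∀ i, 0 < q i) (hmpos : ∀ i, 0 < m i)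
    (qℓ : ℕ) (hqℓ : qℓ = q ⟨ℓ - 1, by omega⟩)
    (P : Polynomial ℂ)
    (hP : P = X ^ qℓ - ∑ i, C (m i : ℂ) * X ^ (qℓ - q i))
    (S : ℕ → ℂ) (hS : ∀ M : ℕ, S M = (P.roots.map fun η => η ^ M).sum)
    (φ : ℝ) (hφpos : 0 < φ) (hφroot : P.eval (φ : ℂ) = 0)
    (hφunique : ∀ x : ℝ, 0 < x → P.eval (x : ℂ) = 0 → x = φ)
    (g : ℕ) (hg : g = Finset.univ.gcd q)
    (ψ : ℝ) (hψ0 : 0 ≤ ψ)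
    (hψ : ∀ η ∈ P.roots, ‖η‖ < φ → ‖η‖ ≤ ψ) :
    ∀ N : ℕ, 2 ≤ N →
      ‖(1 / (N : ℂ)) *
          ∑ d ∈ N.divisors.filter (fun d => 2 ≤ d),
            (-1 : ℂ) ^ (N / d) * ((ArithmeticFunction.moebius d : ℤ) : ℂ) * S (N / d)‖
        ≤ g * φ ^ ((N : ℝ) / 2) + qℓ * ψ ^ ((N : ℝ) / 2) := by
  set ilast : Fin ℓ := ⟨ℓ - 1, by omega⟩ with hilast
  have hqle : ∀ i, q i ≤ qℓ := by
    intro i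
    rw [hqℓ]
    refine hqmono.monotone ?_
    have := i.isLt
    rw [Fin.le_def]
    simp [ilast]
    omega
  have hqℓpos : 0 < qℓ := by rw [hqℓ]; exact hqpos _
  have hndegsum : (∑ i, C (m i : ℂ) * X ^ (qℓ - q i)).natDegree < qℓ := by
    have h1 : (∑ i, C (m i : ℂ) * X ^ (qℓ - q i)).natDegree ≤ qℓ - 1 := by
      apply Polynomial.natDegree_sum_le_of_forall_le
      intro i _
      refine le_trans (Polynomial.natDegree_C_mul_le _ _) ?_
      rw [Polynomial.natDegree_X_pow]
      have := hqpos i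
      omega
    omega
  have hdegsum : (∑ i, C (m i : ℂ) * X ^ (qℓ - q i)).degree < (qℓ : WithBot ℕ) := by
    apply lt_of_le_of_lt (Polynomial.degree_le_natDegree)
    exact_mod_cast hndegsum
  have hmonic : P.Monic := by rw [hP]; exact Polynomial.monic_X_pow_sub hdegsum
  have hPne : P ≠ 0 := hmonic.ne_zero
  have hdeg : P.natDegree = qℓ := by
    rw [hP, Polynomial.natDegree_sub_eq_left_of_natDegree_lt]
    · exact Polynomial.natDegree_X_pow _
    · rw [Polynomial.natDegree_X_pow]; exact hndegsum
  have hcard : Multiset.card P.roots = qℓ := by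
    rw [← hdeg]
    exact Polynomial.splits_iff_card_roots.mp (IsAlgClosed.splits P)
  -- the real identity from φ being a root
  have hsum : ∑ i, (m i : ℝ) * φ ^ (qℓ - q i) = φ ^ qℓ := by
    have := hφroot
    rw [hP] at this
    simp only [eval_sub, eval_pow, eval_X, eval_finset_sum, eval_mul, eval_C] at this
    have h2 : ((φ ^ qℓ - ∑ i, (m i:ℝ) * φ ^ (qℓ - q i) : ℝ) : ℂ) = 0 := by
      push_cast
      convert this using 2
    have h3 := Complex.ofReal_eq_zero.mp h2
    linarith
  have hφne : φ ≠ 0 := hφpos.ne'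
  have hppow : ∀ i, φ ^ (qℓ - q i) = φ ^ qℓ / φ ^ (q i) := by
    intro i
    rw [eq_div_iff (by positivity), ← pow_add]
    congr 1
    have := hqle i; omega
  have hA : ∑ i, (m i : ℝ) / φ ^ (q i) = 1 := by
    have h1 : ∑ i, (m i : ℝ) * φ ^ (qℓ - q i) = φ ^ qℓ * ∑ i, (m i : ℝ) / φ ^ (q i) := by
      rw [Finset.mul_sum]
      apply Finset.sum_congr rfl
      intro i _
      rw [hppow i]
      ring
    have h2 : φ ^ qℓ * ∑ i, (m i : ℝ) / φ ^ (q i) = φ ^ qℓ * 1 := by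
      rw [mul_one, ← h1, hsum]
    exact mul_left_cancel₀ (by positivity) h2
  have hφ1 : 1 ≤ φ := by
    by_contra hlt
    push_neg at hlt
    have h0 : Fin ℓ := ⟨0, by omega⟩
    have hterm : ∀ i, (1:ℝ) < (m i : ℝ) / φ ^ (q i) := by
      intro i
      have hm1 : (1:ℝ) ≤ (m i : ℝ) := by exact_mod_cast hmpos i
      have hp1 : φ ^ (q i) < 1 := pow_lt_one₀ hφpos.le hlt (hqpos i).ne'
      have hppos : (0:ℝ) < φ ^ (q i) := by positivity
      rw [lt_div_iff₀ hppos]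
      nlinarith
    have : (1:ℝ) < ∑ i, (m i : ℝ) / φ ^ (q i) := by
      calc (1:ℝ) < (m h0 : ℝ) / φ ^ (q h0) := hterm h0
      _ ≤ ∑ i, (m i : ℝ) / φ ^ (q i) := by
          apply Finset.single_le_sum (f := fun i => (m i : ℝ) / φ ^ (q i))
          · intro i _; positivity
          · exact Finset.mem_univ _
    linarith [hA]
  -- root equation
  have hrooteq : ∀ η ∈ P.roots, η ^ qℓ = ∑ i, (m i : ℂ) * η ^ (qℓ - q i) := by
    intro η hη
    have := Polynomial.isRoot_of_mem_roots hη
    rw [hP] at this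
    simp only [IsRoot, eval_sub, eval_pow, eval_X, eval_finset_sum, eval_mul, eval_C] at this
    linear_combination this
  have hrootne : ∀ η ∈ P.roots, η ≠ 0 := by
    intro η hη h0
    have := hrooteq η hη
    rw [h0] at this
    have hz : ∀ i : Fin ℓ, (m i : ℂ) * (0:ℂ) ^ (qℓ - q i) = if i = ilast then (m i : ℂ) else 0 := by
      intro i
      rcases eq_or_ne i ilast with h | h
      · subst h; simp [← hqℓ, Nat.sub_self]
      · rw [if_neg h, zero_pow, mul_zero]
        have h2 : q i ≠ qℓ := fun hc => h (hqmono.injective (hc.trans hqℓ))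
        have := hqle i; omega
    rw [zero_pow hqℓpos.ne', Finset.sum_congr rfl (fun i _ => hz i),
      Finset.sum_ite_eq' Finset.univ ilast (fun i => (m i : ℂ)),
      if_pos (Finset.mem_univ _)] at this
    have : (m ilast : ℂ) = 0 := this.symm
    exact_mod_cast absurd (by exact_mod_cast this) (hmpos ilast).ne'
  have hinst : Nonempty (Fin ℓ) := ⟨⟨0, by omega⟩⟩
  have habs : ∀ η ∈ P.roots, ‖η‖ ≤ φ := by
    intro η hη
    by_contra hlt
    push_neg at hlt
    set s := ‖η‖ with hs
    have hs0 : 0 < s := lt_trans hφpos hlt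
    have h1 : s ^ qℓ ≤ ∑ i, (m i : ℝ) * s ^ (qℓ - q i) := by
      have := hrooteq η hη
      calc s ^ qℓ = ‖η ^ qℓ‖ := by rw [norm_pow]
      _ = ‖∑ i, (m i : ℂ) * η ^ (qℓ - q i)‖ := by rw [this]
      _ ≤ ∑ i, ‖(m i : ℂ) * η ^ (qℓ - q i)‖ := norm_sum_le _ _
      _ = ∑ i, (m i : ℝ) * s ^ (qℓ - q i) := by
          apply Finset.sum_congr rfl
          intro i _
          rw [norm_mul, norm_pow, Complex.norm_natCast]
    have h2 : ∑ i, (m i : ℝ) * s ^ (qℓ - q i) < s ^ qℓ := by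
      have hterm : ∀ i : Fin ℓ, (m i : ℝ) * s ^ (qℓ - q i) < s ^ qℓ * ((m i : ℝ) / φ ^ (q i)) := by
        intro i
        have he : s ^ (qℓ - q i) = s ^ qℓ / s ^ (q i) := by
          rw [eq_div_iff (by positivity), ← pow_add]
          congr 1
          have := hqle i; omega
        rw [he]
        have hd : (m i : ℝ) / s ^ (q i) < (m i : ℝ) / φ ^ (q i) := by
          apply div_lt_div_of_pos_left (by exact_mod_cast hmpos i) (by positivity)
          exact pow_lt_pow_left₀ hlt hφpos.le (hqpos i).ne'
        calc (m i : ℝ) * (s ^ qℓ / s ^ (q i)) = s ^ qℓ * ((m i : ℝ) / s ^ (q i)) := by ring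
        _ < s ^ qℓ * ((m i : ℝ) / φ ^ (q i)) := by
            exact mul_lt_mul_of_pos_left hd (by positivity)
      calc ∑ i, (m i : ℝ) * s ^ (qℓ - q i)
          < ∑ i, s ^ qℓ * ((m i : ℝ) / φ ^ (q i)) :=
            Finset.sum_lt_sum_of_nonempty Finset.univ_nonempty (fun i _ => hterm i)
      _ = s ^ qℓ * ∑ i, ((m i : ℝ) / φ ^ (q i)) := by rw [Finset.mul_sum]
      _ = s ^ qℓ := by rw [hA, mul_one]
    linarith
  -- equality case: roots of modulus φ satisfy η ^ q i = φ ^ q i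
  have hmax : ∀ η ∈ P.roots, ‖η‖ = φ → ∀ i, η ^ (q i) = ((φ ^ (q i) : ℝ) : ℂ) := by
    intro η hη hab i
    have hη0 : η ≠ 0 := hrootne η hη
    set w : Fin ℓ → ℂ := fun i => (m i : ℂ) / η ^ (q i) with hw
    have hwsum : ∑ i, w i = 1 := by
      have h1 := hrooteq η hη
      have h2 : ∀ i, (m i : ℂ) * η ^ (qℓ - q i) = η ^ qℓ * w i := by
        intro i
        rw [hw]
        have he : η ^ (qℓ - q i) = η ^ qℓ / η ^ (q i) := by
          rw [eq_div_iff (pow_ne_zero _ hη0), ← pow_add]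
          congr 1
          have := hqle i; omega
        rw [he]
        ring
      rw [Finset.sum_congr rfl (fun i _ => h2 i), ← Finset.mul_sum] at h1
      exact (mul_left_cancel₀ (pow_ne_zero qℓ hη0)
        (show η ^ qℓ * 1 = η ^ qℓ * ∑ i, w i by rw [mul_one]; exact h1)).symm
    have hwabs : ∀ j, ‖w j‖ = (m j : ℝ) / φ ^ (q j) := by
      intro j
      rw [hw]
      simp only [norm_div, norm_pow, Complex.norm_natCast, hab]
    have hre : ∀ j, (w j).re ≤ ‖w j‖ := fun j => Complex.re_le_norm _
    have hresum : ∑ j, (w j).re = 1 := by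
      have := congrArg Complex.re hwsum
      rw [Complex.re_sum] at this
      simpa using this
    have habssum : ∑ j, ‖w j‖ = 1 := by
      rw [Finset.sum_congr rfl (fun j _ => hwabs j), hA]
    have heq : ∀ j ∈ Finset.univ, (w j).re = ‖w j‖ := by
      apply (Finset.sum_eq_sum_iff_of_le (fun j _ => hre j)).mp (by rw [hresum, habssum])
    have hwi : w i = ((m i : ℝ) / φ ^ (q i) : ℝ) := by
      have h3 := heq i (Finset.mem_univ i)
      have him : (w i).im = 0 := by
        have := Complex.sq_norm (w i)
        rw [← h3, Complex.normSq_apply] at this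
        nlinarith [sq_nonneg ((w i).im)]
      apply Complex.ext
      · rw [Complex.ofReal_re, h3, hwabs i]
      · rw [him, Complex.ofReal_im]
    -- solve for η ^ q i
    have hm0 : (m i : ℂ) ≠ 0 := by exact_mod_cast (hmpos i).ne'
    have hwne : w i ≠ 0 := by
      rw [hwi]
      have : (0:ℝ) < (m i : ℝ) / φ ^ (q i) := by
        have := hmpos i
        positivity
      exact_mod_cast Complex.ofReal_ne_zero.mpr this.ne'
    have hφc : ((φ:ℂ)) ^ (q i) ≠ 0 := pow_ne_zero _ (Complex.ofReal_ne_zero.mpr hφne)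
    have hηq : η ^ (q i) ≠ 0 := pow_ne_zero _ hη0
    have hwi' : (m i : ℂ) / η ^ (q i) = (m i : ℂ) / (φ:ℂ) ^ (q i) := by
      rw [hw] at hwi
      push_cast at hwi ⊢
      exact hwi
    rw [div_eq_div_iff hηq hφc] at hwi'
    push_cast
    exact (mul_left_cancel₀ hm0 hwi').symm
  -- gcd facts
  have hgdvd : ∀ i, g ∣ q i := by
    intro i
    rw [hg]
    exact Finset.gcd_dvd (Finset.mem_univ i)
  have hgpos : 0 < g := by
    rcases Nat.eq_zero_or_pos g with h | h
    · exfalso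
      have := hgdvd ⟨0, by omega⟩
      rw [h] at this
      have := Nat.eq_zero_of_zero_dvd this
      exact absurd this (hqpos _).ne'
    · exact h
  -- roots of maximal modulus satisfy η ^ g = φ ^ g
  have hηg : ∀ η ∈ P.roots, ‖η‖ = φ → η ^ g = ((φ ^ g : ℝ) : ℂ) := by
    intro η hη hab
    have hη0 : η ≠ 0 := hrootne η hη
    have hφc : ((φ:ℂ)) ≠ 0 := Complex.ofReal_ne_zero.mpr hφne
    set ζ : ℂ := η / (φ:ℂ) with hζ
    have hζpow : ∀ i, ζ ^ (q i) = 1 := by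
      intro i
      rw [hζ, div_pow]
      rw [hmax η hη hab i]
      push_cast
      field_simp
    have hord : orderOf ζ ∣ g := by
      rw [hg]
      apply Finset.dvd_gcd
      intro i _
      exact orderOf_dvd_of_pow_eq_one (hζpow i)
    have hζg : ζ ^ g = 1 := orderOf_dvd_iff_pow_eq_one.mp hord
    rw [hζ, div_pow] at hζg
    push_cast
    field_simp at hζg ⊢
    linear_combination hζg
  -- roots of maximal modulus are simple
  have hsimple : ∀ η ∈ P.roots, ‖η‖ = φ → P.roots.count η = 1 := by
    intro η hη hab
    have hη0 : η ≠ 0 := hrootne η hη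
    rw [Polynomial.count_roots]
    have h1 : 1 ≤ P.rootMultiplicity η := by
      rw [← Polynomial.count_roots]
      exact Multiset.one_le_count_iff_mem.mpr hη
    by_contra hne
    have h2 : 2 ≤ P.rootMultiplicity η := by omega
    -- then η is a root of the derivative
    have hder : (Polynomial.derivative P).eval η = 0 := by
      obtain ⟨Q, hQ⟩ : (X - C η) ^ 2 ∣ P :=
        dvd_trans (pow_dvd_pow _ h2) (Polynomial.pow_rootMultiplicity_dvd P η)
      rw [hQ]
      simp [Polynomial.derivative_mul, Polynomial.derivative_pow]
    -- compute the derivative evaluation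
    have hD : η * (Polynomial.derivative P).eval η
        = η ^ qℓ * ((∑ i, (m i : ℝ) * (q i : ℝ) / φ ^ (q i) : ℝ) : ℂ) := by
      rw [hP]
      simp only [Polynomial.derivative_sub, Polynomial.derivative_X_pow,
        Polynomial.derivative_sum, Polynomial.derivative_C_mul,
        eval_sub, eval_mul, eval_pow, eval_X, eval_C, eval_finset_sum, eval_natCast]
      rw [mul_sub, Finset.mul_sum]
      have hcast : ((∑ i, (m i : ℝ) * (q i : ℝ) / φ ^ (q i) : ℝ) : ℂ)
          = ∑ i, (m i : ℂ) * (q i : ℂ) / (φ:ℂ) ^ (q i) := by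
        push_cast
        rfl
      rw [hcast]
      have hφq : ∀ i : Fin ℓ, ((φ:ℂ)) ^ (q i) ≠ 0 :=
        fun i => pow_ne_zero _ (Complex.ofReal_ne_zero.mpr hφne)
      have hpow1 : η * η ^ (qℓ - 1) = η ^ qℓ := by
        rw [← pow_succ']
        congr 1
        omega
      have hterm : ∀ i : Fin ℓ, η * ((m i:ℂ) * (((qℓ - q i : ℕ):ℂ) * η ^ (qℓ - q i - 1)))
          = (m i:ℂ) * (((qℓ - q i:ℕ):ℂ) * η ^ (qℓ - q i)) := by
        intro i
        rcases Nat.eq_zero_or_pos (qℓ - q i) with h | h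
        · simp [h]
        · have hp : η * η ^ (qℓ - q i - 1) = η ^ (qℓ - q i) := by
            rw [← pow_succ']
            congr 1
            omega
          calc η * ((m i:ℂ) * (((qℓ - q i : ℕ):ℂ) * η ^ (qℓ - q i - 1)))
              = (m i:ℂ) * (((qℓ - q i : ℕ):ℂ) * (η * η ^ (qℓ - q i - 1))) := by ring
          _ = (m i:ℂ) * (((qℓ - q i:ℕ):ℂ) * η ^ (qℓ - q i)) := by rw [hp]
      rw [show η * ((qℓ:ℂ) * η ^ (qℓ - 1)) = (qℓ:ℂ) * (η * η ^ (qℓ - 1)) from by ring, hpow1]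
      rw [Finset.sum_congr rfl (fun i _ => hterm i)]
      have key : ∀ i : Fin ℓ, (qℓ:ℂ) * ((m i:ℂ) * η ^ (qℓ - q i))
          - (m i:ℂ) * (((qℓ - q i:ℕ):ℂ) * η ^ (qℓ - q i))
          = η ^ qℓ * ((m i:ℂ) * (q i:ℂ) / (φ:ℂ) ^ (q i)) := by
        intro i
        have hq' : ((qℓ - q i : ℕ):ℂ) = (qℓ:ℂ) - (q i:ℂ) := by
          push_cast [Nat.cast_sub (hqle i)]
          ring
        have hsplit : η ^ (qℓ - q i) * ((φ:ℂ)) ^ (q i) = η ^ qℓ := by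
          have hm := hmax η hη hab i
          push_cast at hm
          rw [← hm, ← pow_add]
          congr 1
          have := hqle i
          omega
        have he : η ^ (qℓ - q i) = η ^ qℓ / (φ:ℂ) ^ (q i) := by
          rw [eq_div_iff (hφq i)]
          exact hsplit
        calc (qℓ:ℂ) * ((m i:ℂ) * η ^ (qℓ - q i)) - (m i:ℂ) * (((qℓ - q i:ℕ):ℂ) * η ^ (qℓ - q i))
            = (m i:ℂ) * ((qℓ:ℂ) - ((qℓ - q i:ℕ):ℂ)) * η ^ (qℓ - q i) := by ring
        _ = (m i:ℂ) * (q i:ℂ) * η ^ (qℓ - q i) := by rw [hq']; ring_nf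
        _ = (m i:ℂ) * (q i:ℂ) * (η ^ qℓ / (φ:ℂ) ^ (q i)) := by rw [he]
        _ = η ^ qℓ * ((m i:ℂ) * (q i:ℂ) / (φ:ℂ) ^ (q i)) := by ring
      calc (qℓ:ℂ) * η ^ qℓ - ∑ i, (m i:ℂ) * (((qℓ - q i:ℕ):ℂ) * η ^ (qℓ - q i))
          = ∑ i, ((qℓ:ℂ) * ((m i:ℂ) * η ^ (qℓ - q i))
              - (m i:ℂ) * (((qℓ - q i:ℕ):ℂ) * η ^ (qℓ - q i))) := by
            rw [Finset.sum_sub_distrib, ← Finset.mul_sum, ← hrooteq η hη]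
      _ = ∑ i, η ^ qℓ * ((m i:ℂ) * (q i:ℂ) / (φ:ℂ) ^ (q i)) :=
            Finset.sum_congr rfl (fun i _ => key i)
      _ = η ^ qℓ * ∑ i, (m i:ℂ) * (q i:ℂ) / (φ:ℂ) ^ (q i) := (Finset.mul_sum _ _ _).symm
    -- contradiction
    have hBpos : (0:ℝ) < ∑ i, (m i : ℝ) * (q i : ℝ) / φ ^ (q i) := by
      apply Finset.sum_pos _ Finset.univ_nonempty
      intro i _
      have h1 := hmpos i
      have h2 := hqpos i
      positivity
    rw [hder, mul_zero] at hD
    have : η ^ qℓ * ((∑ i, (m i : ℝ) * (q i : ℝ) / φ ^ (q i) : ℝ) : ℂ) ≠ 0 := by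
      apply mul_ne_zero (pow_ne_zero _ hη0)
      exact Complex.ofReal_ne_zero.mpr hBpos.ne'
    exact this hD.symm
  -- split the roots
  set big := P.roots.filter (fun η => φ ≤ ‖η‖) with hbig
  set small := P.roots.filter (fun η => ¬ φ ≤ ‖η‖) with hsmall
  have hsplitroots : big + small = P.roots := Multiset.filter_add_not _ _
  set bc := Multiset.card big with hbc
  set k := Multiset.card small with hk
  have hbck : bc + k = qℓ := by
    rw [hbc, hk, ← Multiset.card_add, hsplitroots, hcard]
  have hbig_eq : ∀ η ∈ big, ‖η‖ = φ := by
    intro η hη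
    rw [hbig, Multiset.mem_filter] at hη
    exact le_antisymm (habs η hη.1) hη.2
  have hbig_mem : ∀ η ∈ big, η ∈ P.roots := by
    intro η hη
    rw [hbig, Multiset.mem_filter] at hη
    exact hη.1
  have hsmall_le : ∀ η ∈ small, ‖η‖ ≤ ψ := by
    intro η hη
    rw [hsmall, Multiset.mem_filter] at hη
    exact hψ η hη.1 (lt_of_not_ge hη.2)
  have hsmall_mem : ∀ η ∈ small, η ∈ P.roots := by
    intro η hη
    rw [hsmall, Multiset.mem_filter] at hη
    exact hη.1
  -- big count bound
  have hbcg : bc ≤ g := by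
    have hnodup : big.Nodup := by
      rw [Multiset.nodup_iff_count_le_one]
      intro η
      by_cases hmem : η ∈ big
      · calc big.count η ≤ P.roots.count η := Multiset.count_le_of_le _ (Multiset.filter_le _ _)
        _ = 1 := hsimple η (hbig_mem η hmem) (hbig_eq η hmem)
      · rw [Multiset.count_eq_zero_of_notMem hmem]
        omega
    set G : Polynomial ℂ := X ^ g - C ((φ ^ g : ℝ):ℂ) with hG
    have hGm : G.Monic := Polynomial.monic_X_pow_sub_C _ hgpos.ne'
    have hsub : big.toFinset ⊆ G.roots.toFinset := by
      intro η hη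
      rw [Multiset.mem_toFinset] at hη ⊢
      rw [Polynomial.mem_roots hGm.ne_zero]
      rw [Polynomial.IsRoot, hG]
      simp only [eval_sub, eval_pow, eval_X, eval_C]
      rw [hηg η (hbig_mem η hη) (hbig_eq η hη)]
      ring
    calc bc = big.toFinset.card := (Multiset.toFinset_card_of_nodup hnodup).symm
    _ ≤ G.roots.toFinset.card := Finset.card_le_card hsub
    _ ≤ Multiset.card G.roots := Multiset.toFinset_card_le _
    _ ≤ G.natDegree := Polynomial.card_roots' G
    _ = g := by rw [hG, Polynomial.natDegree_X_pow_sub_C]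
  have hφM : ∀ M : ℕ, (0:ℝ) ≤ φ ^ M := fun M => by positivity
  -- bound on Newton sums
  have hSb : ∀ M : ℕ, ‖(P.roots.map fun η => η ^ M).sum‖
      ≤ bc * φ ^ M + k * ψ ^ M := by
    intro M
    rw [← hsplitroots, Multiset.map_add, Multiset.sum_add]
    refine le_trans (norm_add_le _ _) (add_le_add ?_ ?_)
    · calc ‖(big.map fun η => η ^ M).sum‖
          = ‖(big.map fun η => η ^ M).sum‖ := rfl
      _ ≤ ((big.map fun η => η ^ M).map norm).sum := norm_multiset_sum_le _
      _ ≤ Multiset.card ((big.map fun η => η ^ M).map norm) • (φ ^ M) := by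
          apply Multiset.sum_le_card_nsmul
          intro x hx
          rw [Multiset.mem_map] at hx
          obtain ⟨y, hy, rfl⟩ := hx
          rw [Multiset.mem_map] at hy
          obtain ⟨η, hη, rfl⟩ := hy
          rw [norm_pow, hbig_eq η hη]
      _ = bc * φ ^ M := by
          rw [Multiset.card_map, Multiset.card_map, nsmul_eq_mul]
    · calc ‖(small.map fun η => η ^ M).sum‖
          = ‖(small.map fun η => η ^ M).sum‖ := rfl
      _ ≤ ((small.map fun η => η ^ M).map norm).sum := norm_multiset_sum_le _
      _ ≤ Multiset.card ((small.map fun η => η ^ M).map norm) • (ψ ^ M) := by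
          apply Multiset.sum_le_card_nsmul
          intro x hx
          rw [Multiset.mem_map] at hx
          obtain ⟨y, hy, rfl⟩ := hx
          rw [Multiset.mem_map] at hy
          obtain ⟨η, hη, rfl⟩ := hy
          rw [norm_pow]
          exact pow_le_pow_left₀ (norm_nonneg _) (hsmall_le η hη) M
      _ = k * ψ ^ M := by
          rw [Multiset.card_map, Multiset.card_map, nsmul_eq_mul]
  -- product of roots bound
  have hprodb : (1:ℝ) ≤ φ ^ g * ψ ^ k := by
    have hc0 := Polynomial.Splits.coeff_zero_eq_prod_roots_of_monic
      (IsAlgClosed.splits P) hmonic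
    have heval : P.coeff 0 = -(m ilast : ℂ) := by
      rw [Polynomial.coeff_zero_eq_eval_zero, hP]
      simp only [eval_sub, eval_pow, eval_X, eval_finset_sum, eval_mul, eval_C]
      have hz : ∀ i : Fin ℓ, (m i : ℂ) * (0:ℂ) ^ (qℓ - q i)
          = if i = ilast then (m i : ℂ) else 0 := by
        intro i
        rcases eq_or_ne i ilast with h | h
        · subst h
          simp [← hqℓ, Nat.sub_self]
        · rw [if_neg h, zero_pow, mul_zero]
          have h2 : q i ≠ qℓ := fun hc => h (hqmono.injective (hc.trans hqℓ))
          have := hqle i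
          omega
      rw [zero_pow hqℓpos.ne', Finset.sum_congr rfl (fun i _ => hz i),
        Finset.sum_ite_eq' Finset.univ ilast (fun i => (m i : ℂ)),
        if_pos (Finset.mem_univ _)]
      ring
    have habs0 : ‖P.roots.prod‖ = (m ilast : ℝ) := by
      have := congrArg norm hc0
      rw [heval] at this
      simp only [norm_neg, norm_mul, norm_pow, norm_one, one_pow, one_mul,
        Complex.norm_natCast] at this
      exact this.symm
    have hmprod : ‖P.roots.prod‖ = (P.roots.map norm).prod := by
      exact map_multiset_prod (normHom : ℂ →*₀ ℝ) _
    have hsplit2 : (P.roots.map norm).prod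
        = (big.map norm).prod * (small.map norm).prod := by
      rw [← hsplitroots, Multiset.map_add, Multiset.prod_add]
    have hbigprod : (big.map norm).prod ≤ φ ^ bc := by
      have := aux_prod_le' φ hφpos.le (big.map norm) ?_
      · rwa [Multiset.card_map] at this
      · intro x hx
        rw [Multiset.mem_map] at hx
        obtain ⟨η, hη, rfl⟩ := hx
        exact ⟨norm_nonneg _, (hbig_eq η hη).le⟩
    have hsmallprod : (small.map norm).prod ≤ ψ ^ k := by
      have := aux_prod_le' ψ hψ0 (small.map norm) ?_
      · rwa [Multiset.card_map] at this
      · intro x hx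
        rw [Multiset.mem_map] at hx
        obtain ⟨η, hη, rfl⟩ := hx
        exact ⟨norm_nonneg _, hsmall_le η hη⟩
    have hm1 : (1:ℝ) ≤ (m ilast : ℝ) := by exact_mod_cast hmpos ilast
    have hsp_nonneg : (0:ℝ) ≤ (small.map norm).prod :=
      Multiset.prod_nonneg (by
        intro x hx
        rw [Multiset.mem_map] at hx
        obtain ⟨η, hη, rfl⟩ := hx
        exact norm_nonneg _)
    have hstep : (m ilast : ℝ) ≤ φ ^ bc * ψ ^ k := by
      rw [← habs0, hmprod, hsplit2]
      exact mul_le_mul hbigprod hsmallprod hsp_nonneg (hφM bc)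
    have hbcpow : φ ^ bc ≤ φ ^ g := pow_le_pow_right₀ hφ1 hbcg
    calc (1:ℝ) ≤ (m ilast : ℝ) := hm1
    _ ≤ φ ^ bc * ψ ^ k := hstep
    _ ≤ φ ^ g * ψ ^ k := by
        apply mul_le_mul_of_nonneg_right hbcpow (by positivity)
  -- final assembly
  intro N hN
  have hN0 : (0:ℕ) < N := by omega
  set F := N.divisors.filter (fun d => 2 ≤ d) with hF
  set t : ℝ := φ ^ ((N : ℝ) / 2) with htdef
  have hN2 : (0:ℝ) ≤ (N:ℝ)/2 := by positivity
  have ht1 : 1 ≤ t := Real.one_le_rpow hφ1 hN2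
  have ht0 : 0 ≤ t := by linarith
  set u : ℝ := if 1 ≤ ψ then ψ ^ ((N : ℝ) / 2) else ψ with hudef
  have hu0 : 0 ≤ u := by
    rw [hudef]
    split
    · positivity
    · exact hψ0
  -- facts about F
  have hFmem : ∀ d ∈ F, d ∣ N ∧ 2 ≤ d := by
    intro d hd
    rw [hF, Finset.mem_filter, Nat.mem_divisors] at hd
    exact ⟨hd.1.1, hd.2⟩
  have hFdivle : ∀ d ∈ F, 1 ≤ N / d ∧ 2 * (N / d) ≤ N := by
    intro d hd
    obtain ⟨hdvd, hd2⟩ := hFmem d hd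
    have h1 : 1 ≤ N / d := Nat.div_pos (Nat.le_of_dvd hN0 hdvd) (by omega)
    have h2 : d * (N / d) = N := Nat.mul_div_cancel' hdvd
    constructor
    · exact h1
    · calc 2 * (N / d) ≤ d * (N / d) := Nat.mul_le_mul_right _ hd2
      _ = N := h2
  have hFcard : (F.card : ℝ) ≤ (N:ℝ)/2 := by
    have h1 : F.card ≤ (Finset.Icc 1 (N/2)).card := by
      apply Finset.card_le_card_of_injOn (fun d => N / d)
      · intro d hd
        simp only [Finset.coe_Icc, Set.mem_Icc]
        obtain ⟨h1, h2⟩ := hFdivle d hd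
        constructor
        · exact h1
        · omega
      · intro d1 h1 d2 h2 heq
        simp only at heq
        obtain ⟨hdvd1, _⟩ := hFmem d1 (by simpa using h1)
        obtain ⟨hdvd2, _⟩ := hFmem d2 (by simpa using h2)
        rw [← Nat.div_div_self hdvd1 hN0.ne', ← Nat.div_div_self hdvd2 hN0.ne', heq]
    rw [Nat.card_Icc] at h1
    have h2 : (F.card : ℝ) ≤ ((N / 2 + 1 - 1 : ℕ) : ℝ) := by exact_mod_cast h1
    calc (F.card : ℝ) ≤ ((N / 2 + 1 - 1 : ℕ) : ℝ) := h2
    _ = ((N / 2 : ℕ) : ℝ) := by norm_num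
    _ ≤ (N:ℝ)/2 := Nat.cast_div_le
  -- per-term bound
  have hterm : ∀ d ∈ F, ‖(-1 : ℂ) ^ (N / d)
      * ((ArithmeticFunction.moebius d : ℤ) : ℂ) * S (N / d)‖ ≤ bc * t + k * u := by
    intro d hd
    obtain ⟨he1, he2⟩ := hFdivle d hd
    set e := N / d with hedef
    have hmu : ‖((ArithmeticFunction.moebius d : ℤ) : ℂ)‖ ≤ 1 := by
      rw [Complex.norm_intCast]
      have := ArithmeticFunction.abs_moebius_le_one (n := d)
      exact_mod_cast this
    have hneg : ‖(-1 : ℂ) ^ e‖ = 1 := by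
      rw [norm_pow, norm_neg, norm_one, one_pow]
    have hSe : ‖S e‖ ≤ bc * φ ^ e + k * ψ ^ e := by
      rw [hS e]
      exact hSb e
    have hφe : φ ^ e ≤ t := by
      rw [htdef, ← Real.rpow_natCast φ e]
      apply Real.rpow_le_rpow_of_exponent_le hφ1
      rw [le_div_iff₀ (by norm_num : (0:ℝ) < 2)]
      exact_mod_cast (by omega : e * 2 ≤ N)
    have hψe : ψ ^ e ≤ u := by
      rw [hudef]
      split
      · rename_i hψ1
        rw [← Real.rpow_natCast ψ e]
        apply Real.rpow_le_rpow_of_exponent_le hψ1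
        rw [le_div_iff₀ (by norm_num : (0:ℝ) < 2)]
        exact_mod_cast (by omega : e * 2 ≤ N)
      · rename_i hψ1
        push_neg at hψ1
        calc ψ ^ e ≤ ψ ^ 1 := pow_le_pow_of_le_one hψ0 hψ1.le he1
        _ = ψ := pow_one ψ
    calc ‖(-1 : ℂ) ^ e * ((ArithmeticFunction.moebius d : ℤ) : ℂ) * S e‖
        = ‖(-1 : ℂ) ^ e‖ * ‖((ArithmeticFunction.moebius d : ℤ) : ℂ)‖
          * ‖S e‖ := by rw [norm_mul, norm_mul]
    _ ≤ 1 * 1 * ‖S e‖ := by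
        apply mul_le_mul _ le_rfl (norm_nonneg _) (by norm_num)
        rw [hneg, one_mul]
        linarith [hmu]
    _ = ‖S e‖ := by ring
    _ ≤ bc * φ ^ e + k * ψ ^ e := hSe
    _ ≤ bc * t + k * u := by
        apply add_le_add
        · exact mul_le_mul_of_nonneg_left hφe (by positivity)
        · exact mul_le_mul_of_nonneg_left hψe (by positivity)
  -- sum bound
  have hsumbound : ‖(1 / (N : ℂ)) *
      ∑ d ∈ F, (-1 : ℂ) ^ (N / d) * ((ArithmeticFunction.moebius d : ℤ) : ℂ) * S (N / d)‖
      ≤ (1/2) * (bc * t + k * u) := by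
    have hbcu0 : (0:ℝ) ≤ bc * t + k * u := by positivity
    rw [norm_mul]
    have h1 : ‖1 / (N : ℂ)‖ = 1 / (N:ℝ) := by
      rw [norm_div, norm_one, Complex.norm_natCast]
    rw [h1]
    have h2 : ‖∑ d ∈ F, (-1 : ℂ) ^ (N / d)
        * ((ArithmeticFunction.moebius d : ℤ) : ℂ) * S (N / d)‖ ≤ F.card * (bc * t + k * u) := by
      calc ‖∑ d ∈ F, (-1 : ℂ) ^ (N / d)
          * ((ArithmeticFunction.moebius d : ℤ) : ℂ) * S (N / d)‖
          ≤ ∑ d ∈ F, ‖(-1 : ℂ) ^ (N / d)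
            * ((ArithmeticFunction.moebius d : ℤ) : ℂ) * S (N / d)‖ := norm_sum_le _ _
      _ ≤ ∑ _d ∈ F, (bc * t + k * u) := Finset.sum_le_sum hterm
      _ = F.card * (bc * t + k * u) := by rw [Finset.sum_const, nsmul_eq_mul]
    calc (1 / (N:ℝ)) * ‖∑ d ∈ F, (-1 : ℂ) ^ (N / d)
        * ((ArithmeticFunction.moebius d : ℤ) : ℂ) * S (N / d)‖
        ≤ (1 / (N:ℝ)) * (F.card * (bc * t + k * u)) := by
          apply mul_le_mul_of_nonneg_left h2 (by positivity)
    _ ≤ (1 / (N:ℝ)) * (((N:ℝ)/2) * (bc * t + k * u)) := by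
          apply mul_le_mul_of_nonneg_left _ (by positivity)
          exact mul_le_mul_of_nonneg_right hFcard hbcu0
    _ = (1/2) * (bc * t + k * u) * ((N:ℝ) * (1/(N:ℝ))) := by ring
    _ = (1/2) * (bc * t + k * u) := by
          rw [mul_one_div_cancel (by exact_mod_cast hN0.ne' : (N:ℝ) ≠ 0), mul_one]
  refine le_trans hsumbound ?_
  -- final comparison
  have hkqℓ : (k:ℝ) ≤ (qℓ:ℝ) := by exact_mod_cast (by omega : k ≤ qℓ)
  have hbcg' : (bc:ℝ) ≤ (g:ℝ) := by exact_mod_cast hbcg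
  rw [hudef]
  split
  · rename_i hψ1
    have hu0' : (0:ℝ) ≤ ψ ^ ((N:ℝ)/2) := by positivity
    nlinarith [mul_le_mul_of_nonneg_right hbcg' ht0, mul_le_mul_of_nonneg_right hkqℓ hu0']
  · rename_i hψ1
    push_neg at hψ1
    -- here u = ψ < 1
    rcases Nat.eq_zero_or_pos k with hk0 | hkpos
    · rw [hk0]
      have : (0:ℝ) ≤ (qℓ:ℝ) * ψ ^ ((N:ℝ)/2) := by positivity
      push_cast
      nlinarith [mul_le_mul_of_nonneg_right hbcg' ht0]
    · -- main case
      have hkR : (0:ℝ) < (k:ℝ) := by exact_mod_cast hkpos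
      have hgR : (1:ℝ) ≤ (g:ℝ) := by exact_mod_cast hgpos
      -- ψ ≥ φ ^ (-(g:ℝ)/k)
      have hψlow : φ ^ (-(g:ℝ)/(k:ℝ)) ≤ ψ := by
        have h1 : (φ ^ (-(g:ℝ)/(k:ℝ))) ^ k = φ ^ (-(g:ℝ)) := by
          rw [← Real.rpow_natCast (φ ^ (-(g:ℝ)/(k:ℝ))) k, ← Real.rpow_mul hφpos.le]
          congr 1
          field_simp
        have h2 : φ ^ (-(g:ℝ)) = (φ ^ g : ℝ)⁻¹ := by
          rw [Real.rpow_neg hφpos.le, Real.rpow_natCast]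
        have h3 : (φ ^ g : ℝ)⁻¹ ≤ ψ ^ k := by
          rw [inv_le_iff_one_le_mul₀ (by positivity)]
          calc (1:ℝ) ≤ φ ^ g * ψ ^ k := hprodb
          _ = ψ ^ k * φ ^ g := by ring
        have h4 : (φ ^ (-(g:ℝ)/(k:ℝ))) ^ k ≤ ψ ^ k := by
          rw [h1, h2]
          exact h3
        exact le_of_pow_le_pow_left₀ hkpos.ne' hψ0 h4
      have hψpow : t ^ (-(g:ℝ)/(k:ℝ)) ≤ ψ ^ ((N:ℝ)/2) := by
        have h5 : (φ ^ (-(g:ℝ)/(k:ℝ))) ^ ((N:ℝ)/2) ≤ ψ ^ ((N:ℝ)/2) :=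
          Real.rpow_le_rpow (Real.rpow_nonneg hφpos.le _) hψlow hN2
        calc t ^ (-(g:ℝ)/(k:ℝ)) = (φ ^ ((N:ℝ)/2)) ^ (-(g:ℝ)/(k:ℝ)) := by rw [htdef]
        _ = φ ^ (((N:ℝ)/2) * (-(g:ℝ)/(k:ℝ))) := by rw [← Real.rpow_mul hφpos.le]
        _ = (φ ^ (-(g:ℝ)/(k:ℝ))) ^ ((N:ℝ)/2) := by
            rw [← Real.rpow_mul hφpos.le]
            congr 1
            ring
        _ ≤ ψ ^ ((N:ℝ)/2) := h5
      have hamgm := aux_amgm (g:ℝ) (k:ℝ) t hgR hkR ht1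
      have hψ1' : (k:ℝ) * ψ ≤ (k:ℝ) := by nlinarith
      have hfin : (k:ℝ) * t ^ (-(g:ℝ)/(k:ℝ)) ≤ (qℓ:ℝ) * ψ ^ ((N:ℝ)/2) := by
        have := mul_le_mul_of_nonneg_left hψpow hkR.le
        have h7 : (k:ℝ) * ψ ^ ((N:ℝ)/2) ≤ (qℓ:ℝ) * ψ ^ ((N:ℝ)/2) := by
          apply mul_le_mul_of_nonneg_right hkqℓ (by positivity)
        linarith
      have h8 : (bc:ℝ) * t ≤ (g:ℝ) * t := mul_le_mul_of_nonneg_right hbcg' ht0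
      rw [neg_div] at hfin
      linarith [h8, hamgm, hψ1', hfin]
end

section
/- Let q ≥ 2 be an integer. The polynomial P(z) = z^{q+1} − z − 1 has a unique positive real root φ, and it satisfies 2^{1/(q+1)} < φ < 1 + 1/q. -/
/-!
A positive root satisfies `φ ^ (q + 1) = φ + 1 > φ`, so `φ > 1`, and on `[1, ∞)` the function
`x ↦ x ^ (q + 1) - x - 1` is strictly increasing; hence there is at most one positive root.
By Bernoulli, `t = 1 + 1/q` has `t ^ q ≥ 2`, so `t ^ (q + 1) ≥ 2t > t + 1`; the function is
negative at `1` and positive at `t`, so the unique root lies in `(1, t)`. Finally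
`φ ^ (q + 1) = φ + 1 > 2` yields `φ > 2 ^ (1/(q+1))`.
-/

open Set

section

variable {q : ℕ} {x y : ℝ}

lemma one_lt_of_pow_succ_sub_sub_one_eq_zero (hx : 0 < x) (h : x ^ (q + 1) - x - 1 = 0) :
    1 < x := by
  by_contra! hx1
  have : x ^ (q + 1) ≤ x := pow_le_of_le_one hx.le hx1 q.succ_ne_zero
  linarith

lemma strictMonoOn_pow_succ_sub_sub_one (hq : 1 ≤ q) :
    StrictMonoOn (fun x : ℝ => x ^ (q + 1) - x - 1) (Ici 1) := by
  intro a (ha : 1 ≤ a) b (hb : 1 ≤ b) hab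
  have hab_pow : a ^ q ≤ b ^ q := pow_le_pow_left₀ (by linarith) hab.le q
  have hb_pow : 1 < b ^ q := one_lt_pow₀ (ha.trans_lt hab) (by omega)
  have ha_pow : 1 ≤ a ^ q := one_le_pow₀ ha
  have : a * (a ^ q - 1) < b * (b ^ q - 1) := by nlinarith
  simp only [pow_succ']
  linarith

lemma eq_of_pow_succ_sub_sub_one_eq_zero (hq : 1 ≤ q) (hx : 0 < x) (hy : 0 < y)
    (hx_root : x ^ (q + 1) - x - 1 = 0) (hy_root : y ^ (q + 1) - y - 1 = 0) : x = y :=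
  (strictMonoOn_pow_succ_sub_sub_one hq).injOn
    (one_lt_of_pow_succ_sub_sub_one_eq_zero hx hx_root).le
    (one_lt_of_pow_succ_sub_sub_one_eq_zero hy hy_root).le (hx_root.trans hy_root.symm)

lemma two_le_one_add_one_div_pow (hq : q ≠ 0) : 2 ≤ (1 + 1 / (q : ℝ)) ^ q := by
  have hnonneg : (0 : ℝ) ≤ 1 / q := by positivity
  have hbern := one_add_mul_le_pow (a := 1 / (q : ℝ)) (by linarith) q
  rwa [mul_one_div_cancel (by exact_mod_cast hq), one_add_one_eq_two] at hbern

lemma pow_succ_sub_sub_one_pos_at_one_add_one_div (hq : q ≠ 0) :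
    0 < (1 + 1 / (q : ℝ)) ^ (q + 1) - (1 + 1 / (q : ℝ)) - 1 := by
  have h2 := two_le_one_add_one_div_pow hq
  have hpos : (0 : ℝ) < 1 / q := by positivity
  rw [pow_succ']
  nlinarith

lemma exists_pow_succ_sub_sub_one_eq_zero (hq : q ≠ 0) :
    ∃ x ∈ Ioo 1 (1 + 1 / (q : ℝ)), x ^ (q + 1) - x - 1 = 0 := by
  have hle : (1 : ℝ) ≤ 1 + 1 / q := le_add_of_nonneg_right (by positivity)
  have hcont : ContinuousOn (fun x : ℝ => x ^ (q + 1) - x - 1) (Icc 1 (1 + 1 / q)) := by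
    fun_prop
  exact intermediate_value_Ioo hle hcont
    ⟨by norm_num, pow_succ_sub_sub_one_pos_at_one_add_one_div hq⟩

lemma two_rpow_one_div_lt_of_pow_succ_sub_sub_one_eq_zero (hx : 1 < x)
    (h : x ^ (q + 1) - x - 1 = 0) : (2 : ℝ) ^ ((1 : ℝ) / (q + 1)) < x := by
  have hroot_pow : ((2 : ℝ) ^ ((1 : ℝ) / (q + 1))) ^ (q + 1) = 2 := by
    rw [one_div, ← Nat.cast_succ]
    exact Real.rpow_inv_natCast_pow zero_le_two q.succ_ne_zero
  have : ((2 : ℝ) ^ ((1 : ℝ) / (q + 1))) ^ (q + 1) < x ^ (q + 1) := by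
    rw [hroot_pow]
    linarith
  exact lt_of_pow_lt_pow_left₀ (q + 1) (by linarith) this

end

/-- Let `q ≥ 2`. The polynomial `P(z) = z^{q+1} - z - 1` has a unique positive real root
`φ`, and it satisfies `2^{1/(q+1)} < φ < 1 + 1/q`. -/
theorem stmt_12 (q : ℕ) (hq : 2 ≤ q) :
    (∃! x : ℝ, 0 < x ∧ x ^ (q + 1) - x - 1 = 0) ∧
      ∀ φ : ℝ, 0 < φ → φ ^ (q + 1) - φ - 1 = 0 →
        (2 : ℝ) ^ ((1 : ℝ) / (q + 1)) < φ ∧ φ < 1 + 1 / (q : ℝ) := by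
  obtain ⟨x, ⟨hx1, hxt⟩, hx_root⟩ := exists_pow_succ_sub_sub_one_eq_zero (q := q) (by omega)
  have hx_pos : 0 < x := by linarith
  have h_unique : ∀ y : ℝ, 0 < y → y ^ (q + 1) - y - 1 = 0 → y = x := fun y hy hy_root =>
    eq_of_pow_succ_sub_sub_one_eq_zero (by omega) hy hx_pos hy_root hx_root
  refine ⟨⟨x, ⟨hx_pos, hx_root⟩, fun y hy => h_unique y hy.1 hy.2⟩, fun φ hφ hφ_root => ?_⟩
  obtain rfl := h_unique φ hφ hφ_root
  exact ⟨two_rpow_one_div_lt_of_pow_succ_sub_sub_one_eq_zero hx1 hx_root, hxt⟩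
end

section
/- Let q ≥ 2 be an integer, and let φ be the unique positive real root of P(z) = z^{q+1} − z − 1. Then every complex root η of P with η ≠ φ satisfies |η| < φ strictly. -/
/-- Let `q ≥ 2` and let `φ` be the unique positive real root of `P(z) = z^{q+1} - z - 1`.
Then every complex root `η` of `P` with `η ≠ φ` satisfies `|η| < φ` strictly. -/
theorem stmt_13 (q : ℕ) (hq : 2 ≤ q)
    (φ : ℝ) (hφpos : 0 < φ) (hφroot : φ ^ (q + 1) - φ - 1 = 0)
    (hφunique : ∀ x : ℝ, 0 < x → x ^ (q + 1) - x - 1 = 0 → x = φ) :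
    ∀ η : ℂ, η ^ (q + 1) - η - 1 = 0 → η ≠ (φ : ℂ) → ‖η‖ < φ := by
  intro η hroot hne
  set r := ‖η‖ with hr
  have hr0 : 0 ≤ r := norm_nonneg η
  have hroot' : η ^ (q + 1) = η + 1 := by linear_combination hroot
  have hφeq : φ ^ (q + 1) = φ + 1 := by linarith
  have hφ1 : 1 < φ := by
    by_contra h
    push_neg at h
    have : φ ^ (q + 1) ≤ 1 := pow_le_one₀ hφpos.le h
    linarith
  have habs : ‖η + 1‖ = r ^ (q + 1) := by
    rw [← hroot', norm_pow]
  have hrpow : r ^ (q + 1) ≤ r + 1 := by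
    calc r ^ (q + 1) = ‖η + 1‖ := habs.symm
      _ ≤ ‖η‖ + ‖(1 : ℂ)‖ := norm_add_le _ _
      _ = r + 1 := by simp [hr]
  have hrle : r ≤ φ := by
    by_contra h
    push_neg at h
    have h1r : 1 < r := hφ1.trans h
    have hc : 0 < φ ^ q - 1 := by
      have := one_lt_pow₀ hφ1 (by omega : q ≠ 0)
      linarith
    have hd : φ ^ q - 1 ≤ r ^ q - 1 := by
      have := pow_le_pow_left₀ hφpos.le h.le q
      linarith
    have hmul : φ * (φ ^ q - 1) < r * (r ^ q - 1) :=
      mul_lt_mul h hd hc (by linarith)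
    have e1 : φ * (φ ^ q - 1) = φ ^ (q + 1) - φ := by ring
    have e2 : r * (r ^ q - 1) = r ^ (q + 1) - r := by ring
    rw [e1, e2] at hmul
    linarith
  rcases hrle.lt_or_eq with h | h
  · exact h
  · exfalso
    have habs2 : ‖η + 1‖ = r + 1 := by
      rw [habs, h, hφeq]
    have hsq1 : η.re ^ 2 + η.im ^ 2 = r ^ 2 := by
      have := Complex.sq_norm η
      rw [Complex.normSq_apply] at this
      rw [← hr] at this
      nlinarith [this]
    have hsq2 : (η.re + 1) ^ 2 + η.im ^ 2 = (r + 1) ^ 2 := by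
      have := Complex.sq_norm (η + 1)
      rw [Complex.normSq_apply] at this
      rw [habs2] at this
      simp at this
      nlinarith [this]
    have hre : η.re = r := by nlinarith
    have him : η.im = 0 := by nlinarith [sq_nonneg η.im]
    apply hne
    apply Complex.ext
    · simpa using hre.trans h
    · simpa using him
end

section
/- Let α and β be positive integers, let a > 0 and b be real numbers, and for each positive integer n let S_n = { nα + jβ : j a nonnegative integer with j > an + b }. Let g' = gcd(α, β) and let B be any real number with B ≥ β²(α + a(1 + β)) + β. Then for every positive integer n and every integer M divisible by g' with M ≥ min(S_n) + B, there exists an integer i with n ≤ i < n + β(β + 1) such that M ∈ S_i. -/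
/-- Bezout-type lemma: let `α, β` be positive integers, `a > 0` and `b` real, and for
`n ≥ 1` let `S_n = { nα + jβ : j ∈ ℕ, j > an + b }`. Let `g' = gcd(α, β)` and let
`B ≥ β²(α + a(1 + β)) + β`. Then for every `n ≥ 1` and every `M` divisible by `g'` with
`M ≥ min(S_n) + B`, there is `i` with `n ≤ i < n + β(β + 1)` and `M ∈ S_i`. -/
theorem stmt_15 (α β : ℕ) (hα : 0 < α) (hβ : 0 < β) (a b : ℝ) (ha : 0 < a)
    (S : ℕ → Set ℕ)
    (hS : ∀ n : ℕ, S n =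
      {x : ℕ | ∃ j : ℕ, (j : ℝ) > a * n + b ∧ x = n * α + j * β})
    (g' : ℕ) (hg' : g' = Nat.gcd α β)
    (B : ℝ) (hB : B ≥ (β : ℝ) ^ 2 * (α + a * (1 + β)) + β) :
    ∀ n : ℕ, 0 < n → ∀ M : ℕ, g' ∣ M → (M : ℝ) ≥ ((sInf (S n) : ℕ) : ℝ) + B →
      ∃ i : ℕ, n ≤ i ∧ i < n + β * (β + 1) ∧ M ∈ S i := by
  intro n hn M hdvdM hM
  -- S n is nonempty
  have hj₁ : ((⌈a * n + b⌉₊ + 1 : ℕ) : ℝ) > a * n + b := by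
    have := Nat.le_ceil (a * ↑n + b)
    push_cast
    linarith
  have hne : (S n).Nonempty := ⟨n * α + (⌈a * n + b⌉₊ + 1) * β, by
    rw [hS]; exact ⟨⌈a * n + b⌉₊ + 1, hj₁, rfl⟩⟩
  have hmem := Nat.sInf_mem hne
  rw [hS] at hmem
  obtain ⟨j₀, hj₀, hEq⟩ := hmem
  rw [hS n, hEq] at hM
  push_cast at hM
  -- find t with β ∣ M - (n+t)α
  have hgd : (Nat.gcd α β : ℤ) ∣ (M : ℤ) - n * α := by
    refine dvd_sub ?_ ?_
    · exact_mod_cast Int.natCast_dvd_natCast.2 (hg' ▸ hdvdM)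
    · exact Dvd.dvd.mul_left (Int.natCast_dvd_natCast.2 (Nat.gcd_dvd_left α β)) n
  obtain ⟨c, hc⟩ := hgd
  set s : ℤ := c * Nat.gcdA α β with hs
  have hsdvd : ((β : ℤ)) ∣ ((M : ℤ) - n * α) - s * α := by
    have hbez := Nat.gcd_eq_gcd_ab α β
    refine ⟨c * Nat.gcdB α β, ?_⟩
    rw [hc, hs]
    linear_combination c * hbez
  have hβZ : (0 : ℤ) < (β : ℤ) := by exact_mod_cast hβ
  set t : ℕ := (s % β).toNat with ht
  have htnn : (0 : ℤ) ≤ s % β := Int.emod_nonneg s (by omega)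
  have htZ : (t : ℤ) = s % β := Int.toNat_of_nonneg htnn
  have ht_lt : t < β := by
    have := Int.emod_lt_of_pos s hβZ
    omega
  have htdvd : ((β : ℤ)) ∣ ((M : ℤ) - n * α) - t * α := by
    have h0 : ((β : ℤ)) ∣ (s - t) := ⟨s / β, by rw [htZ, Int.emod_def]; ring⟩
    have h1 : ((β : ℤ)) ∣ (s - t) * α := dvd_mul_of_dvd_left h0 _
    have h2 := dvd_add hsdvd h1
    have h3 : ((M : ℤ) - n * α) - t * α = (((M : ℤ) - n * α) - s * α) + (s - t) * α := by ring
    rw [h3]; exact h2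
  set jZ : ℤ := ((M : ℤ) - n * α - t * α) / β with hjZ
  have hjmul : jZ * β = (M : ℤ) - n * α - t * α := by
    rw [hjZ]
    exact Int.ediv_mul_cancel (by exact_mod_cast htdvd)
  have hreal : (jZ : ℝ) * β = (M : ℝ) - n * α - t * α := by
    have := congrArg (Int.cast : ℤ → ℝ) hjmul
    push_cast at this
    linarith
  -- real bounds
  have hβr : (1 : ℝ) ≤ β := by exact_mod_cast hβ
  have hαr : (1 : ℝ) ≤ α := by exact_mod_cast hα
  have htr : (t : ℝ) ≤ (β : ℝ) - 1 := by
    have : (t : ℝ) + 1 ≤ β := by exact_mod_cast ht_lt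
    linarith
  have htnn' : (0 : ℝ) ≤ (t : ℝ) := Nat.cast_nonneg t
  have hj₀nn : (0 : ℝ) ≤ (j₀ : ℝ) := Nat.cast_nonneg j₀
  have hβpos : (0 : ℝ) < β := by linarith
  -- jZ > a(n+t)+b
  have hkey : (a * (n + t : ℕ) + b) * β < (jZ : ℝ) * β := by
    rw [hreal]
    push_cast
    nlinarith [mul_lt_mul_of_pos_right hj₀ hβpos,
      mul_le_mul_of_nonneg_right htr (by linarith : (0:ℝ) ≤ (α:ℝ)),
      mul_le_mul_of_nonneg_right htr (mul_nonneg ha.le hβpos.le),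
      mul_nonneg (mul_nonneg hβpos.le (by linarith : (0:ℝ) ≤ (β:ℝ) - 1)) (by linarith : (0:ℝ) ≤ (α:ℝ)),
      mul_nonneg (mul_nonneg ha.le hβpos.le) hβpos.le,
      mul_pos (mul_pos (mul_pos ha hβpos) hβpos) hβpos]
  have hjgtr : (jZ : ℝ) > a * ((n + t : ℕ) : ℝ) + b :=
    lt_of_mul_lt_mul_right hkey (le_of_lt hβpos)
  have hjZnn : (0 : ℤ) ≤ jZ := by
    have h0 : (0 : ℝ) * β < (jZ : ℝ) * β := by
      rw [hreal]
      nlinarith [mul_nonneg hj₀nn hβpos.le,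
        mul_le_mul_of_nonneg_right htr (by linarith : (0:ℝ) ≤ (α:ℝ)),
        mul_nonneg (mul_nonneg hβpos.le (by linarith : (0:ℝ) ≤ (β:ℝ) - 1)) (by linarith : (0:ℝ) ≤ (α:ℝ)),
        mul_nonneg (mul_nonneg ha.le hβpos.le) hβpos.le,
        mul_pos (mul_pos (mul_pos ha hβpos) hβpos) hβpos]
    have h1 : (0 : ℝ) < (jZ : ℝ) := lt_of_mul_lt_mul_right h0 hβpos.le
    exact_mod_cast h1.le
  set j : ℕ := jZ.toNat with hj
  have hjr : ((j : ℕ) : ℝ) = (jZ : ℝ) := by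
    rw [hj]
    exact_mod_cast congrArg (Int.cast : ℤ → ℝ) (Int.toNat_of_nonneg hjZnn)
  have hMeq : M = (n + t) * α + j * β := by
    have : (M : ℤ) = ((n + t) * α + j * β : ℕ) := by
      push_cast [hj, Int.toNat_of_nonneg hjZnn]
      linarith [hjmul]
    exact_mod_cast this
  refine ⟨n + t, Nat.le_add_right n t, ?_, ?_⟩
  · have : β ≤ β * (β + 1) := Nat.le_mul_of_pos_right β (by omega)
    omega
  · rw [hS]
    exact ⟨j, by rw [hjr]; exact_mod_cast hjgtr, hMeq⟩
end
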